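/- arXiv:2412.13901 — 9 statements merged into one kernel-verified Lean document; each statement's English description precedes it below -/
import Mathlib

section
/- Let H(k) be a reproducing kernel Hilbert space on a nonempty set X with kernel k. A function f : X → ℂ belongs to H(k) with norm at most c if and only if the function (x,y) ↦ c²·k(x,y) − f(x)·conj(f(y)) is a positive semidefinite kernel on X. -/
/-!
Write `W = ∑ aᵢ conj f(xᵢ)` and `U = ∑ aᵢ k_{xᵢ}`. The quadratic form of the kernel
`c² k(x, y) - f(x) conj f(y)` at coefficients `a` is `c² ‖U‖² - ‖W‖²`, so positivity of the kernel
says exactly that `U ↦ W` is a well-defined functional of norm at most `c` on the span of the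
kernel vectors. Hahn–Banach extends it to all of `H` without increasing the norm, and its Riesz
representative is the function `f`, viewed as an element of `H(k)`.
-/

open scoped InnerProductSpace

/-- A function `k : X → X → ℂ` is a positive semidefinite (reproducing) kernel:
every finite Gram matrix is positive semidefinite. -/
def IsPSDKernel {X : Type*} (k : X → X → ℂ) : Prop :=
  ∀ (n : ℕ) (x : Fin n → X) (c : Fin n → ℂ),
    0 ≤ (∑ i, ∑ j, starRingEnd ℂ (c i) * k (x i) (x j) * c j).re ∧
    (∑ i, ∑ j, starRingEnd ℂ (c i) * k (x i) (x j) * c j).im = 0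

open scoped ComplexConjugate

theorem sum_conj_mul_inner_mul_eq_norm_sq {𝕜 E ι : Type*} [RCLike 𝕜] [SeminormedAddCommGroup E]
    [InnerProductSpace 𝕜 E] [Fintype ι] (u : ι → E) (a : ι → 𝕜) :
    ∑ i, ∑ j, conj (a i) * ⟪u i, u j⟫_𝕜 * a j = (‖∑ i, a i • u i‖ : 𝕜) ^ 2 := by
  rw [← inner_self_eq_norm_sq_to_K, sum_inner]
  refine Finset.sum_congr rfl fun i _ => ?_
  rw [inner_sum]
  refine Finset.sum_congr rfl fun j _ => ?_
  rw [inner_smul_left, inner_smul_right]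
  ring

theorem Finsupp.linearCombination_eq_sum_fin {R M ι : Type*} [Semiring R] [AddCommMonoid M]
    [Module R M] (g : ι → M) (d : ι →₀ R) :
    linearCombination R g d =
      ∑ j, d (d.support.equivFin.symm j) • g (d.support.equivFin.symm j) := by
  rw [linearCombination_apply, Finsupp.sum, ← Finset.sum_coe_sort]
  exact (Equiv.sum_comp d.support.equivFin.symm _).symm

theorem LinearMap.exists_comp_rangeRestrict_eq {R M N P : Type*} [Ring R] [AddCommGroup M]
    [AddCommGroup N] [AddCommGroup P] [Module R M] [Module R N] [Module R P]
    (T : M →ₗ[R] N) (φ : M →ₗ[R] P) (h : ker T ≤ ker φ) :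
    ∃ ψ : range T →ₗ[R] P, ψ ∘ₗ T.rangeRestrict = φ := by
  refine ⟨(ker T).liftQ φ h ∘ₗ T.quotKerEquivRange.symm.toLinearMap, ?_⟩
  ext d
  change (ker T).liftQ φ h (T.quotKerEquivRange.symm ⟨T d, mem_range_self T d⟩) = φ d
  rw [quotKerEquivRange_symm_apply_image, Submodule.mkQ_apply, Submodule.liftQ_apply]

section Extension

variable {𝕜 E ι : Type*} [RCLike 𝕜] [NormedAddCommGroup E] [NormedSpace 𝕜 E]

open Finsupp in
theorem exists_strongDual_of_norm_linearCombination_le (v : ι → E) (w : ι → 𝕜) {c : ℝ}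
    (hc : 0 ≤ c)
    (h : ∀ d : ι →₀ 𝕜, ‖linearCombination 𝕜 w d‖ ≤ c * ‖linearCombination 𝕜 v d‖) :
    ∃ g : StrongDual 𝕜 E, (∀ i, g (v i) = w i) ∧ ‖g‖ ≤ c := by
  set T := linearCombination 𝕜 v
  have hker : LinearMap.ker T ≤ LinearMap.ker (linearCombination 𝕜 w) := fun d hd =>
    norm_le_zero_iff.mp <| by simpa [LinearMap.mem_ker.mp hd] using h d
  obtain ⟨ψ, hψ⟩ := T.exists_comp_rangeRestrict_eq _ hker
  have hψ_apply (d : ι →₀ 𝕜) : ψ (T.rangeRestrict d) = linearCombination 𝕜 w d :=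
    LinearMap.congr_fun hψ d
  have hψ_le : ∀ u, ‖ψ u‖ ≤ c * ‖u‖ := by
    rintro ⟨_, d, rfl⟩
    exact hψ_apply d ▸ h d
  obtain ⟨g, hg, hg_norm⟩ :=
    exists_extension_norm_eq (LinearMap.range T) (ψ.mkContinuous c hψ_le)
  refine ⟨g, fun i => ?_, hg_norm ▸ LinearMap.mkContinuous_norm_le ψ hc hψ_le⟩
  simpa [T, hψ_apply] using hg (T.rangeRestrict (single i 1))

theorem exists_strongDual_apply_eq_and_norm_le_iff (v : ι → E) (w : ι → 𝕜) {c : ℝ} (hc : 0 ≤ c) :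
    (∃ g : StrongDual 𝕜 E, (∀ i, g (v i) = w i) ∧ ‖g‖ ≤ c) ↔
      ∀ (n : ℕ) (x : Fin n → ι) (a : Fin n → 𝕜),
        ‖∑ i, a i * w (x i)‖ ≤ c * ‖∑ i, a i • v (x i)‖ := by
  constructor
  · rintro ⟨g, hg, hg_norm⟩ n x a
    have hg_sum : g (∑ i, a i • v (x i)) = ∑ i, a i * w (x i) := by simp [hg]
    exact hg_sum ▸ g.le_of_opNorm_le hg_norm _
  · refine fun h => exists_strongDual_of_norm_linearCombination_le v w hc fun d => ?_
    simpa only [Finsupp.linearCombination_eq_sum_fin, smul_eq_mul] using h _ _ _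

end Extension

section Kernel

variable {X H : Type*} [SeminormedAddCommGroup H] [InnerProductSpace ℂ H]

theorem sum_conj_mul_kernel_mul_eq (kv : X → H) (f : X → ℂ) (c : ℝ) {n : ℕ} (x : Fin n → X)
    (a : Fin n → ℂ) :
    ∑ i, ∑ j, conj (a i) * ((c : ℂ) ^ 2 * ⟪kv (x i), kv (x j)⟫_ℂ - f (x i) * conj (f (x j))) * a j
      = ((c ^ 2 * ‖∑ i, a i • kv (x i)‖ ^ 2 - ‖∑ i, a i * conj (f (x i))‖ ^ 2 : ℝ) : ℂ) := by
  have hf (y z : X) : f y * conj (f z) = ⟪conj (f y), conj (f z)⟫_ℂ := by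
    simp [RCLike.inner_apply, mul_comm]
  have hsplit : ∑ i, ∑ j, conj (a i) *
        ((c : ℂ) ^ 2 * ⟪kv (x i), kv (x j)⟫_ℂ - f (x i) * conj (f (x j))) * a j
      = (c : ℂ) ^ 2 * ∑ i, ∑ j, conj (a i) * ⟪kv (x i), kv (x j)⟫_ℂ * a j
        - ∑ i, ∑ j, conj (a i) * ⟪conj (f (x i)), conj (f (x j))⟫_ℂ * a j := by
    simp only [hf, Finset.mul_sum, ← Finset.sum_sub_distrib]
    exact Finset.sum_congr rfl fun i _ => Finset.sum_congr rfl fun j _ => by ring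
  rw [hsplit, sum_conj_mul_inner_mul_eq_norm_sq, sum_conj_mul_inner_mul_eq_norm_sq]
  simp only [smul_eq_mul]
  push_cast
  rfl

theorem isPSDKernel_sub_iff (kv : X → H) (f : X → ℂ) {c : ℝ} (hc : 0 ≤ c) :
    IsPSDKernel (fun x y => (c : ℂ) ^ 2 * ⟪kv x, kv y⟫_ℂ - f x * conj (f y)) ↔
      ∀ (n : ℕ) (x : Fin n → X) (a : Fin n → ℂ),
        ‖∑ i, a i * conj (f (x i))‖ ≤ c * ‖∑ i, a i • kv (x i)‖ := by
  refine forall₃_congr fun n x a => ?_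
  rw [sum_conj_mul_kernel_mul_eq, Complex.ofReal_re, Complex.ofReal_im, and_iff_left rfl,
    sub_nonneg, ← mul_pow, sq_le_sq₀ (norm_nonneg _) (mul_nonneg hc (norm_nonneg _))]

end Kernel

theorem exists_inner_eq_and_norm_le_iff {X H : Type*} [NormedAddCommGroup H]
    [InnerProductSpace ℂ H] [CompleteSpace H] (kv : X → H) (f : X → ℂ) (c : ℝ) :
    (∃ F : H, (∀ x, f x = ⟪kv x, F⟫_ℂ) ∧ ‖F‖ ≤ c) ↔
      ∃ g : StrongDual ℂ H, (∀ x, g (kv x) = conj (f x)) ∧ ‖g‖ ≤ c := by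
  have hF (F : H) (x : X) :
      f x = ⟪kv x, F⟫_ℂ ↔ InnerProductSpace.toDual ℂ H F (kv x) = conj (f x) := by
    rw [InnerProductSpace.toDual_apply_apply, ← inner_conj_symm, eq_comm, starRingEnd_apply,
      starRingEnd_apply]
    exact star_eq_iff_star_eq.trans eq_comm
  simp only [(InnerProductSpace.toDual ℂ H).surjective.exists, LinearIsometryEquiv.norm_map, hF]

theorem membership_norm_iff_psd_general
    {X : Type*}
    {H : Type*} [NormedAddCommGroup H] [InnerProductSpace ℂ H] [CompleteSpace H]
    (kv : X → H)
    (k : X → X → ℂ) (hk : ∀ x y, k x y = ⟪kv x, kv y⟫_ℂ)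
    (f : X → ℂ) (c : ℝ) (hc : 0 ≤ c) :
    (∃ F : H, (∀ x, f x = ⟪kv x, F⟫_ℂ) ∧ ‖F‖ ≤ c) ↔
      IsPSDKernel (fun x y => (c : ℂ) ^ 2 * k x y - f x * starRingEnd ℂ (f y)) := by
  obtain rfl : k = fun x y => ⟪kv x, kv y⟫_ℂ := funext₂ hk
  rw [exists_inner_eq_and_norm_le_iff, exists_strongDual_apply_eq_and_norm_le_iff _ _ hc,
    isPSDKernel_sub_iff kv f hc]

/-- In the RKHS `H(k)` of a reproducing kernel `k` on a nonempty set `X`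
(modelled by a Hilbert space `H` together with kernel vectors `kv x` whose span is dense,
with `k x y = ⟪kv x, kv y⟫` and membership of `f : X → ℂ` meaning `f = ⟪kv ·, F⟫` for some
`F : H`), a function `f` belongs to `H(k)` with norm at most `c` if and only if
`(x, y) ↦ c² k(x,y) − f(x) conj (f y)` is a positive semidefinite kernel. -/
theorem membership_norm_iff_psd
    {X : Type*} [Nonempty X]
    {H : Type*} [NormedAddCommGroup H] [InnerProductSpace ℂ H] [CompleteSpace H]
    (kv : X → H)
    (hdense : DenseRange fun v : Submodule.span ℂ (Set.range kv) => (v : H))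
    (k : X → X → ℂ) (hk : ∀ x y, k x y = ⟪kv x, kv y⟫_ℂ)
    (f : X → ℂ) (c : ℝ) (hc : 0 ≤ c) :
    (∃ F : H, (∀ x, f x = ⟪kv x, F⟫_ℂ) ∧ ‖F‖ ≤ c) ↔
      IsPSDKernel (fun x y => (c : ℂ) ^ 2 * k x y - f x * starRingEnd ℂ (f y)) :=
  membership_norm_iff_psd_general kv k hk f c hc
end

section
/- Let k, t be reproducing kernels on nonempty sets X and Y respectively, with t nonzero, and let φ : X → Y be such that (x,y) ↦ k(x,y)/t(φ(x),φ(y)) is a reproducing kernel. Then for every f in the Hilbert space H(k/(t∘φ)), the weighted composition operator W_{f,φ} defined by (W_{f,φ} g)(x) = f(x)·g(φ(x)) is a bounded linear operator from H(t) into H(k) with norm at most ‖f‖. -/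
/-!
Write `F = f · (g ∘ φ)`, `A = c² k/(t∘φ) − f f̄` and `B = m² (t∘φ) − (g∘φ)(g∘φ)̄`; both are
positive semidefinite by hypothesis. Since `t` never vanishes, `c² k/(t∘φ) · m² (t∘φ) = c² m² k`,
so expanding `(A + f f̄)(B + (g∘φ)(g∘φ)̄)` gives
`c² m² k − F F̄ = A B + A (g∘φ)(g∘φ)̄ + f f̄ B`,
a sum of Schur products of positive semidefinite kernels.
-/

open scoped ComplexOrder
open Matrix

/-- Over `ℂ` no Hermitian hypothesis is needed: `0 ≤ z` in `ComplexOrder` forces `z` real, and a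
complex matrix whose quadratic form is real-valued is Hermitian. -/
theorem Matrix.posSemidef_iff_forall_dotProduct_mulVec_nonneg {n : Type*} [Fintype n]
    [DecidableEq n] (M : Matrix n n ℂ) :
    M.PosSemidef ↔ ∀ c : n → ℂ, 0 ≤ star c ⬝ᵥ (M *ᵥ c) := by
  rw [← isPositive_toEuclideanLin_iff, LinearMap.isPositive_iff_complex]
  refine (EuclideanSpace.equiv n ℂ).forall_congr' fun x => ?_
  have h_conj : x ⬝ᵥ star (M *ᵥ x) = star (star x ⬝ᵥ M *ᵥ x) := by
    rw [star_dotProduct, star_star, dotProduct_comm]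
  simp [EuclideanSpace.inner_eq_star_dotProduct, Complex.nonneg_iff, h_conj, Complex.ext_iff,
    eq_comm, and_comm]

namespace IsPSDKernel

variable {X Y : Type*}

theorem iff_posSemidef (k : X → X → ℂ) :
    IsPSDKernel k ↔ ∀ (n : ℕ) (x : Fin n → X), (of fun i j => k (x i) (x j)).PosSemidef := by
  refine forall_congr' fun n => forall_congr' fun x => ?_
  rw [posSemidef_iff_forall_dotProduct_mulVec_nonneg]
  refine forall_congr' fun c => ?_
  simp [Complex.nonneg_iff, dotProduct, mulVec, Finset.mul_sum, mul_assoc, eq_comm]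

theorem add {k k' : X → X → ℂ} (hk : IsPSDKernel k) (hk' : IsPSDKernel k') :
    IsPSDKernel fun x y => k x y + k' x y := by
  rw [iff_posSemidef] at *
  exact fun n x => (hk n x).add (hk' n x)

theorem mul {k k' : X → X → ℂ} (hk : IsPSDKernel k) (hk' : IsPSDKernel k') :
    IsPSDKernel fun x y => k x y * k' x y := by
  rw [iff_posSemidef] at *
  exact fun n x => (hk n x).hadamard (hk' n x)

theorem mul_conj (f : X → ℂ) : IsPSDKernel fun x y => f x * starRingEnd ℂ (f y) := by
  rw [iff_posSemidef]
  exact fun n x => posSemidef_vecMulVec_self_star (f ∘ x)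

theorem comp {t : Y → Y → ℂ} (ht : IsPSDKernel t) (φ : X → Y) :
    IsPSDKernel fun x y => t (φ x) (φ y) :=
  fun n x => ht n (φ ∘ x)

end IsPSDKernel

theorem weighted_composition_bounded_general
    {X Y : Type*}
    (k : X → X → ℂ) (t : Y → Y → ℂ) (φ : X → Y)
    (htne : ∀ y y' : Y, t y y' ≠ 0)
    (f : X → ℂ) (c : ℝ)
    (hf : IsPSDKernel (fun x y =>
      (c : ℂ) ^ 2 * (k x y / t (φ x) (φ y)) - f x * starRingEnd ℂ (f y))) :
    ∀ (g : Y → ℂ) (m : ℝ), 0 ≤ m →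
      IsPSDKernel (fun x y => (m : ℂ) ^ 2 * t x y - g x * starRingEnd ℂ (g y)) →
      IsPSDKernel (fun x y => ((c * m : ℝ) : ℂ) ^ 2 * k x y -
        (f x * g (φ x)) * starRingEnd ℂ (f y * g (φ y))) := by
  intro g m _ hg
  have hgφ := hg.comp φ
  have hdecomp := ((hf.mul hgφ).add (hf.mul (IsPSDKernel.mul_conj (g ∘ φ)))).add
    ((IsPSDKernel.mul_conj f).mul hgφ)
  convert hdecomp using 1
  ext x y
  have htφ_ne := htne (φ x) (φ y)
  simp only [Function.comp_apply, map_mul]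
  push_cast
  field_simp
  ring

/-- if `φ` is a composition factor of `k` with `t` (that is,
`(x,y) ↦ k x y / t (φ x) (φ y)` is a PSD kernel, `t` nonzero) and `f` belongs to the space
`H(k/(t∘φ))` with norm at most `c` (expressed via the kernel characterization of membership),
then for every `g ∈ H(t)` with norm at most `m`, the weighted composition
`x ↦ f x * g (φ x)` belongs to `H(k)` with norm at most `c * m`; i.e. the weighted
composition operator `W_{f,φ} : H(t) → H(k)` is bounded with norm at most `‖f‖`. -/
theorem weighted_composition_bounded
    {X Y : Type*} [Nonempty X] [Nonempty Y]
    (k : X → X → ℂ) (t : Y → Y → ℂ) (φ : X → Y)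
    (hk : IsPSDKernel k) (ht : IsPSDKernel t)
    (htne : ∀ y y' : Y, t y y' ≠ 0)
    (hfact : IsPSDKernel (fun x y => k x y / t (φ x) (φ y)))
    (f : X → ℂ) (c : ℝ) (hc : 0 ≤ c)
    (hf : IsPSDKernel (fun x y =>
      (c : ℂ) ^ 2 * (k x y / t (φ x) (φ y)) - f x * starRingEnd ℂ (f y))) :
    ∀ (g : Y → ℂ) (m : ℝ), 0 ≤ m →
      IsPSDKernel (fun x y => (m : ℂ) ^ 2 * t x y - g x * starRingEnd ℂ (g y)) →
      IsPSDKernel (fun x y => ((c * m : ℝ) : ℂ) ^ 2 * k x y -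
        (f x * g (φ x)) * starRingEnd ℂ (f y * g (φ y))) :=
  weighted_composition_bounded_general k t φ htne f c hf
end

section
/- Let k be a reproducing kernel on a nonempty set X and let (x_n) be a sequence in X such that the kernel functions k_{x_n} converge pointwise to a function k_ξ that does not belong to H(k). Then k(x_n, x_n) = ‖k_{x_n}‖² → ∞ as n → ∞. -/
open scoped InnerProductSpace
open Filter Topology

/-!
If `k(x_n, x_n) = ‖k_{x_n}‖²` does not tend to infinity, some subsequence of the kernel vectors
is bounded, hence has a weak cluster point `F` (Banach–Alaoglu, with `H` identified with its
dual). Weak convergence gives pointwise convergence `⟪k_y, k_{x_n}⟫ = k(y, x_n) → ⟪k_y, F⟫`,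
so `k_ξ = F ∈ H(k)`.
-/

section

variable {𝕜 H : Type*} [RCLike 𝕜] [NormedAddCommGroup H] [InnerProductSpace 𝕜 H] [CompleteSpace H]

theorem exists_tendsto_inner_of_eventually_norm_le {α : Type*} {U : Ultrafilter α} {v : α → H}
    {C : ℝ} (hv : ∀ᶠ a in U, ‖v a‖ ≤ C) :
    ∃ F : H, ∀ w, Tendsto (fun a => ⟪w, v a⟫_𝕜) U (𝓝 ⟪w, F⟫_𝕜) := by
  set g : α → WeakDual 𝕜 H := fun a => InnerProductSpace.toDual 𝕜 H (v a)
  have hball : (Ultrafilter.map g U : Filter (WeakDual 𝕜 H)) ≤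
      𝓟 (WeakDual.toStrongDual ⁻¹' Metric.closedBall 0 C) := by
    rw [Ultrafilter.coe_map, le_principal_iff, mem_map]
    filter_upwards [hv] with a ha
    rw [Set.mem_preimage, Set.mem_preimage, Metric.mem_closedBall, dist_zero_right]
    exact ((InnerProductSpace.toDual 𝕜 H).norm_map (v a)).trans_le ha
  obtain ⟨F', -, hF'⟩ := (WeakDual.isCompact_closedBall 0 C).ultrafilter_le_nhds _ hball
  refine ⟨(InnerProductSpace.toDual 𝕜 H).symm F', fun w => ?_⟩
  have hdual : Tendsto (fun a => ⟪v a, w⟫_𝕜) U (𝓝 (F' w)) :=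
    (tendsto_iff_forall_eval_tendsto_topDualPairing.mp hF' w :)
  have hconj := (RCLike.continuous_conj.tendsto _).comp hdual
  simp only [Function.comp_def, inner_conj_symm] at hconj
  convert hconj using 2
  rw [← inner_conj_symm]
  exact congrArg _ InnerProductSpace.toDual_symm_apply

theorem exists_inner_eq_of_frequently_norm_le {α ι : Type*} {l : Filter α} {v : α → H} {C : ℝ}
    (hv : ∃ᶠ a in l, ‖v a‖ ≤ C) (w : ι → H) {φ : ι → 𝕜}
    (hφ : ∀ i, Tendsto (fun a => ⟪w i, v a⟫_𝕜) l (𝓝 (φ i))) :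
    ∃ F : H, ∀ i, φ i = ⟪w i, F⟫_𝕜 := by
  have := frequently_iff_neBot.mp hv
  have hU : ↑(Ultrafilter.of (l ⊓ 𝓟 {a | ‖v a‖ ≤ C})) ≤ l ⊓ 𝓟 {a | ‖v a‖ ≤ C} :=
    Ultrafilter.of_le _
  obtain ⟨F, hF⟩ := exists_tendsto_inner_of_eventually_norm_le (𝕜 := 𝕜)
    (le_principal_iff.mp (hU.trans inf_le_right))
  exact ⟨F, fun i => tendsto_nhds_unique ((hφ i).mono_left (hU.trans inf_le_left)) (hF (w i))⟩

end

theorem boundary_explosion_general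
    {X : Type*}
    {H : Type*} [NormedAddCommGroup H] [InnerProductSpace ℂ H] [CompleteSpace H]
    (kv : X → H) (k : X → X → ℂ) (hk : ∀ x y, k x y = ⟪kv x, kv y⟫_ℂ)
    (x : ℕ → X) (kξ : X → ℂ)
    (hlim : ∀ y, Tendsto (fun n => k y (x n)) atTop (nhds (kξ y)))
    (hnotin : ¬ ∃ F : H, ∀ y, kξ y = ⟪kv y, F⟫_ℂ) :
    Tendsto (fun n => (k (x n) (x n)).re) atTop atTop := by
  by_contra hunbounded
  obtain ⟨C, hC⟩ : ∃ C, ∃ᶠ n in atTop, (k (x n) (x n)).re < C := by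
    simpa only [tendsto_atTop, not_forall, not_eventually, not_le] using hunbounded
  have hnorm : ∀ n, ‖kv (x n)‖ ^ 2 = (k (x n) (x n)).re := fun n => by
    rw [hk]
    exact (inner_self_eq_norm_sq (𝕜 := ℂ) _).symm
  have hbounded : ∃ᶠ n in atTop, ‖kv (x n)‖ ≤ √C :=
    hC.mono fun n hn => Real.le_sqrt_of_sq_le ((hnorm n).trans_le hn.le)
  exact hnotin <| exists_inner_eq_of_frequently_norm_le hbounded kv fun y => by
    simpa only [hk] using hlim y

/-- let `k` be a reproducing kernel on a nonempty set `X`, modelled by a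
Hilbert space `H` with kernel vectors `kv x` (`k x y = ⟪kv x, kv y⟫`, so `k_x = kv x`
and `f(x) = ⟪kv x, F⟫` for `f ∈ H(k)`).  If the kernel functions `k_{x_n} = k (·) (x n)`
converge pointwise to a function `kξ` which does not belong to `H(k)`, then
`k(x_n, x_n) = ‖k_{x_n}‖² → ∞`. -/
theorem boundary_explosion
    {X : Type*} [Nonempty X]
    {H : Type*} [NormedAddCommGroup H] [InnerProductSpace ℂ H] [CompleteSpace H]
    (kv : X → H) (k : X → X → ℂ) (hk : ∀ x y, k x y = ⟪kv x, kv y⟫_ℂ)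
    (x : ℕ → X) (kξ : X → ℂ)
    (hlim : ∀ y, Tendsto (fun n => k y (x n)) atTop (nhds (kξ y)))
    (hnotin : ¬ ∃ F : H, ∀ y, kξ y = ⟪kv y, F⟫_ℂ) :
    Tendsto (fun n => (k (x n) (x n)).re) atTop atTop :=
  boundary_explosion_general kv k hk x kξ hlim hnotin
end

section
/- Let k be a reproducing kernel on X and (x_n) a sequence in X such that k_{x_n} converges pointwise to a function k_ξ ∉ H(k). Then for every f ∈ H(k), f(x_n)/k(x_n,x_n)^{1/2} → 0 as n → ∞; equivalently the normalized kernel functions k_{x_n}/‖k_{x_n}‖ converge weakly to 0. -/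
/-!
First `‖kv (x n)‖ → ∞`: otherwise `‖kv (x n)‖ ≤ C` frequently, so the limit functional
`v ↦ lim ⟪kv (x n), v⟫`, defined where the limit exists, is bounded by `C`; Hahn–Banach and
Riesz represent it by some `F`, and `kξ y = ⟪kv y, F⟫` would put `kξ` in `H(k)`.
Then `w n = kv (x n) / ‖kv (x n)‖` has `‖w n‖ ≤ 1` and `⟪w n, kv y⟫ → 0` for every `y`.
For a bounded family the vectors `v` with `⟪w n, v⟫ → 0` form a closed subspace
(equicontinuity); it contains the closed span `K` of the kernel vectors, and also `Kᗮ`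
because every `w n` lies in `K`, hence it is all of `H`.
-/

open scoped InnerProductSpace ComplexConjugate
open Filter Topology

section WeakLimits

variable {𝕜 E ι : Type*} [RCLike 𝕜] [NormedAddCommGroup E] [InnerProductSpace 𝕜 E]

variable (𝕜) in
def convergentInnerSubmodule (u : ι → E) (l : Filter ι) : Submodule 𝕜 E where
  carrier := {v | ∃ c, Tendsto (fun i => ⟪u i, v⟫_𝕜) l (𝓝 c)}
  zero_mem' := ⟨0, by simp [tendsto_const_nhds]⟩
  add_mem' := fun ⟨a, ha⟩ ⟨b, hb⟩ => ⟨a + b, by simpa only [inner_add_right] using ha.add hb⟩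
  smul_mem' r _ := fun ⟨a, ha⟩ => ⟨r * a, by simpa only [inner_smul_right] using ha.const_mul r⟩

variable (𝕜) in
noncomputable def limInner (u : ι → E) (l : Filter ι) [l.NeBot] :
    convergentInnerSubmodule 𝕜 u l →ₗ[𝕜] 𝕜 where
  toFun v := limUnder l fun i => ⟪u i, (v : E)⟫_𝕜
  map_add' v w := tendsto_nhds_unique (tendsto_nhds_limUnder (v + w).2) <| by
    simpa only [Submodule.coe_add, inner_add_right] using
      (tendsto_nhds_limUnder v.2).add (tendsto_nhds_limUnder w.2)
  map_smul' r v := tendsto_nhds_unique (tendsto_nhds_limUnder (r • v).2) <| by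
    simpa only [Submodule.coe_smul, inner_smul_right, RingHom.id_apply, smul_eq_mul] using
      (tendsto_nhds_limUnder v.2).const_mul r

theorem tendsto_limInner {u : ι → E} {l : Filter ι} [l.NeBot]
    (v : convergentInnerSubmodule 𝕜 u l) :
    Tendsto (fun i => ⟪u i, (v : E)⟫_𝕜) l (𝓝 (limInner 𝕜 u l v)) :=
  tendsto_nhds_limUnder v.2

theorem norm_limInner_le {u : ι → E} {l : Filter ι} [l.NeBot] {C : ℝ}
    (hC : ∃ᶠ i in l, ‖u i‖ ≤ C) (v : convergentInnerSubmodule 𝕜 u l) :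
    ‖limInner 𝕜 u l v‖ ≤ C * ‖v‖ :=
  le_of_tendsto_of_frequently (tendsto_limInner v).norm <| hC.mono fun _ hi =>
    (norm_inner_le_norm _ _).trans (mul_le_mul_of_nonneg_right hi (norm_nonneg _))

variable (𝕜) in
def innerNullSubmodule (u : ι → E) (l : Filter ι) : Submodule 𝕜 E where
  carrier := {v | Tendsto (fun i => ⟪u i, v⟫_𝕜) l (𝓝 0)}
  zero_mem' := by simp [tendsto_const_nhds]
  add_mem' {a b} ha hb := by
    simpa only [Set.mem_ofPred_eq, inner_add_right, add_zero] using ha.add hb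
  smul_mem' r _ ha := by
    simpa only [Set.mem_ofPred_eq, inner_smul_right, mul_zero] using ha.const_mul r

@[simp]
theorem mem_innerNullSubmodule {u : ι → E} {l : Filter ι} {v : E} :
    v ∈ innerNullSubmodule 𝕜 u l ↔ Tendsto (fun i => ⟪u i, v⟫_𝕜) l (𝓝 0) :=
  Iff.rfl

theorem isClosed_innerNullSubmodule {u : ι → E} {C : ℝ} (hC : ∀ i, ‖u i‖ ≤ C) (l : Filter ι) :
    IsClosed (innerNullSubmodule 𝕜 u l : Set E) := by
  have hbdd : ∃ C, ∀ i, ‖innerSL 𝕜 (u i)‖ ≤ C :=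
    ⟨C, fun i => (innerSL_apply_norm 𝕜 (u i)).trans_le (hC i)⟩
  have hequi := ((NormedSpace.equicontinuous_TFAE fun i => innerSL 𝕜 (u i)).out 1 5).mpr hbdd
  exact hequi.isClosed_setOfPred_tendsto continuous_const

variable [CompleteSpace E]

theorem exists_tendsto_inner_of_frequently_norm_le {u : ι → E} {l : Filter ι} {C : ℝ}
    (hC : ∃ᶠ i in l, ‖u i‖ ≤ C) :
    ∃ F : E, ∀ v ∈ convergentInnerSubmodule 𝕜 u l,
      Tendsto (fun i => ⟪u i, v⟫_𝕜) l (𝓝 ⟪F, v⟫_𝕜) := by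
  have : l.NeBot := (frequently_true_iff_neBot l).mp (hC.mono fun _ _ => trivial)
  obtain ⟨Λ, hΛ, -⟩ := exists_extension_norm_eq _
    ((limInner 𝕜 u l).mkContinuous C (norm_limInner_le hC))
  refine ⟨(InnerProductSpace.toDual 𝕜 E).symm Λ, fun v hv => ?_⟩
  rw [InnerProductSpace.toDual_symm_apply, hΛ ⟨v, hv⟩]
  exact tendsto_limInner ⟨v, hv⟩

theorem innerNullSubmodule_eq_top {u : ι → E} {C : ℝ} (hC : ∀ i, ‖u i‖ ≤ C) {l : Filter ι}
    {s : Set E} (hus : ∀ i, u i ∈ Submodule.span 𝕜 s) (hs : s ⊆ innerNullSubmodule 𝕜 u l) :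
    innerNullSubmodule 𝕜 u l = ⊤ := by
  set K := (Submodule.span 𝕜 s).topologicalClosure
  have hK : K ≤ innerNullSubmodule 𝕜 u l :=
    Submodule.topologicalClosure_minimal _ (Submodule.span_le.mpr hs)
      (isClosed_innerNullSubmodule hC l)
  have hKperp : Kᗮ ≤ innerNullSubmodule 𝕜 u l := fun v hv => by
    have : ∀ i, ⟪u i, v⟫_𝕜 = 0 := fun i =>
      (Submodule.mem_orthogonal K v).mp hv _ (Submodule.le_topologicalClosure _ (hus i))
    simp [this, tendsto_const_nhds]
  exact top_unique <| K.sup_orthogonal_of_hasOrthogonalProjection ▸ sup_le hK hKperp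

theorem tendsto_norm_atTop_of_not_exists_inner_eq {κ : Type*} {u : ι → E} {l : Filter ι}
    {v : κ → E} {g : κ → 𝕜} (hg : ∀ j, Tendsto (fun i => ⟪u i, v j⟫_𝕜) l (𝓝 (g j)))
    (hnot : ¬ ∃ F : E, ∀ j, g j = ⟪F, v j⟫_𝕜) :
    Tendsto (fun i => ‖u i‖) l atTop := by
  by_contra hu
  obtain ⟨C, hC⟩ : ∃ C, ∃ᶠ i in l, ‖u i‖ ≤ C := by
    simp only [tendsto_atTop, not_forall, not_eventually, not_le] at hu
    obtain ⟨C, hC⟩ := hu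
    exact ⟨C, hC.mono fun _ => le_of_lt⟩
  have : l.NeBot := (frequently_true_iff_neBot l).mp (hC.mono fun _ _ => trivial)
  obtain ⟨F, hF⟩ := exists_tendsto_inner_of_frequently_norm_le (𝕜 := 𝕜) hC
  exact hnot ⟨F, fun j => tendsto_nhds_unique (hg j) (hF (v j) ⟨g j, hg j⟩)⟩

theorem tendsto_inner_div_norm_of_tendsto_norm_atTop {κ : Type*} {u : ι → E} {l : Filter ι}
    {v : κ → E} (hu : Tendsto (fun i => ‖u i‖) l atTop)
    (hspan : ∀ i, u i ∈ Submodule.span 𝕜 (Set.range v))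
    (hv : ∀ j, ∃ c, Tendsto (fun i => ⟪u i, v j⟫_𝕜) l (𝓝 c)) (F : E) :
    Tendsto (fun i => ⟪u i, F⟫_𝕜 / (‖u i‖ : 𝕜)) l (𝓝 0) := by
  set w : ι → E := fun i => (‖u i‖ : 𝕜)⁻¹ • u i
  have hw : ∀ i z, ⟪w i, z⟫_𝕜 = ⟪u i, z⟫_𝕜 / (‖u i‖ : 𝕜) := fun i z => by
    rw [inner_smul_left, map_inv₀, RCLike.conj_ofReal, div_eq_inv_mul]
  have hw_norm : ∀ i, ‖w i‖ ≤ 1 := fun i => by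
    rcases eq_or_ne (u i) 0 with h | h
    · simp [w, h]
    · exact (norm_smul_inv_norm h).le
  have hinv : Tendsto (fun i => (‖u i‖ : 𝕜)⁻¹) l (𝓝 0) := by
    simpa only [Function.comp_def, RCLike.ofReal_inv, map_zero] using
      ((RCLike.continuous_ofReal (K := 𝕜)).tendsto 0).comp (tendsto_inv_atTop_zero.comp hu)
  have hnull : Set.range v ⊆ innerNullSubmodule 𝕜 w l := by
    rintro _ ⟨j, rfl⟩
    obtain ⟨c, hc⟩ := hv j
    simpa only [SetLike.mem_coe, mem_innerNullSubmodule, hw, div_eq_mul_inv, mul_zero] using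
      hc.mul hinv
  have htop := innerNullSubmodule_eq_top hw_norm
    (fun i => Submodule.smul_mem _ _ (hspan i)) hnull
  simpa only [← hw, ← mem_innerNullSubmodule, htop] using Submodule.mem_top

end WeakLimits

theorem growth_restriction_general
    {X : Type*}
    {H : Type*} [NormedAddCommGroup H] [InnerProductSpace ℂ H] [CompleteSpace H]
    (kv : X → H) (k : X → X → ℂ) (hk : ∀ x y, k x y = ⟪kv x, kv y⟫_ℂ)
    (x : ℕ → X) (kξ : X → ℂ)
    (hlim : ∀ y, Tendsto (fun n => k y (x n)) atTop (nhds (kξ y)))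
    (hnotin : ¬ ∃ F : H, ∀ y, kξ y = ⟪kv y, F⟫_ℂ) :
    ∀ F : H, Tendsto (fun n => ⟪kv (x n), F⟫_ℂ / ((‖kv (x n)‖ : ℂ)))
      atTop (nhds 0) := by
  have hconv : ∀ y, Tendsto (fun n => ⟪kv (x n), kv y⟫_ℂ) atTop (𝓝 (conj (kξ y))) := fun y => by
    simpa only [hk, Function.comp_def, inner_conj_symm] using
      (Complex.continuous_conj.tendsto _).comp (hlim y)
  have hnorm : Tendsto (fun n => ‖kv (x n)‖) atTop atTop :=
    tendsto_norm_atTop_of_not_exists_inner_eq hconv fun ⟨F, hF⟩ =>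
      hnotin ⟨F, fun y => by rw [← inner_conj_symm, ← hF, Complex.conj_conj]⟩
  exact tendsto_inner_div_norm_of_tendsto_norm_atTop hnorm
    (fun n => Submodule.subset_span ⟨x n, rfl⟩) fun y => ⟨_, hconv y⟩

/-- with `k` a reproducing kernel on `X` modelled by a Hilbert space `H`
with kernel vectors `kv x` (`k x y = ⟪kv x, kv y⟫`, `f(x) = ⟪kv x, F⟫`), if the kernel
functions `k (·) (x n)` converge pointwise to `kξ ∉ H(k)`, then every `f ∈ H(k)` satisfies
`f (x n) / k(x_n,x_n)^{1/2} → 0`; equivalently the normalized kernel vectors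
`kv (x n) / ‖kv (x n)‖` converge weakly to `0`. -/
theorem growth_restriction
    {X : Type*} [Nonempty X]
    {H : Type*} [NormedAddCommGroup H] [InnerProductSpace ℂ H] [CompleteSpace H]
    (kv : X → H) (k : X → X → ℂ) (hk : ∀ x y, k x y = ⟪kv x, kv y⟫_ℂ)
    (x : ℕ → X) (kξ : X → ℂ)
    (hlim : ∀ y, Tendsto (fun n => k y (x n)) atTop (nhds (kξ y)))
    (hnotin : ¬ ∃ F : H, ∀ y, kξ y = ⟪kv y, F⟫_ℂ) :
    ∀ F : H, Tendsto (fun n => ⟪kv (x n), F⟫_ℂ / ((‖kv (x n)‖ : ℂ)))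
      atTop (nhds 0) :=
  growth_restriction_general kv k hk x kξ hlim hnotin
end

section
/- (Abstract Julia–Carathéodory, key implication) Let k, t be reproducing kernels on X, Y with t satisfying: (B) there is b > 0 with |t(x,y)| > b for all x,y; and (C) for ξ in the reproductive boundary of t with boundary function t_λ, if |t_λ(y_n)| → ∞ then y_n converges to λ in the k-sense. Let φ be a composition factor of k with t, let ξ ∈ ∂_k X with boundary function k_ξ, and λ ∈ ∂_t Y with boundary function t_λ, and suppose q_ξ(x) = k_ξ(x)/t_λ(φ(x)) belongs to H(k/(t∘φ)). Then for every sequence (x_n) with x_n →_k ξ inside a horocyclic region E_k(M,ξ) = {x : k(x,x) ≤ M|k_ξ(x)|²}, one has |t_λ(φ(x_n))| → ∞, hence φ(x_n) →_t λ. -/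
open scoped InnerProductSpace
open Filter Topology

/-!
By (B) the quotient kernel vectors satisfy `‖q_x‖² ≤ k(x,x) / b`, so on the horocyclic region
`‖q_{x_n}‖ ≤ √(M/b) |k_ξ(x_n)|`. Moreover `‖k_{x_n}‖ → ∞`: along a bounded subsequence the
kernel vectors would have a weak cluster point (Banach–Alaoglu) representing `k_ξ` in `H(k)`.
Hence `|k_ξ(x_n)| → ∞`, and the bounded vectors `q_{x_n} / conj k_ξ(x_n)` tend weakly to `0`
against every `q_z`, hence against the closed span of the `q_z`. Pairing them with `q_ξ` gives
`1 / t_λ(φ(x_n)) → 0`, and condition (C) turns `|t_λ(φ(x_n))| → ∞` into `φ(x_n) →_t λ`.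
-/

theorem tendsto_norm_atTop_of_tendsto_inv {𝕜 ι : Type*} [NormedDivisionRing 𝕜] {l : Filter ι}
    {f : ι → 𝕜} (hf : ∀ i, f i ≠ 0) (h : Tendsto (fun i => (f i)⁻¹) l (𝓝 0)) :
    Tendsto (fun i => ‖f i‖) l atTop := by
  simpa only [Function.comp_def, inv_inv] using tendsto_norm_inv_nhdsNE_zero_atTop.comp
    (tendsto_nhdsWithin_iff.2 ⟨h, .of_forall fun i => inv_ne_zero (hf i)⟩)

section InnerProductSpace

variable {𝕜 H ι α : Type*} [RCLike 𝕜] [NormedAddCommGroup H] [InnerProductSpace 𝕜 H]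

theorem exists_clusterPt_inner_of_eventually_norm_le [CompleteSpace H] {l : Filter ι} [l.NeBot]
    {v : ι → H} {B : ℝ} (hv : ∀ᶠ i in l, ‖v i‖ ≤ B) :
    ∃ F : H, ∀ w, ClusterPt ⟪w, F⟫_𝕜 (map (fun i => ⟪w, v i⟫_𝕜) l) := by
  let toDual := InnerProductSpace.toDual 𝕜 H
  let g : ι → WeakDual 𝕜 H := fun i => StrongDual.toWeakDual (toDual (v i))
  have hg : map g l ≤ 𝓟 (WeakDual.toStrongDual ⁻¹' Metric.closedBall 0 B) := by
    rw [le_principal_iff, mem_map]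
    filter_upwards [hv] with i hi
    simpa [g, toDual] using hi
  obtain ⟨φ, -, hφ⟩ := (WeakDual.isCompact_closedBall (0 : StrongDual 𝕜 H) B).exists_clusterPt hg
  refine ⟨toDual.symm (WeakDual.toStrongDual φ), fun w => ?_⟩
  have hφw : ClusterPt (star (φ w)) (map (fun i => star (g i w)) l) := by
    simpa only [map_map, Function.comp_def] using (hφ.map (WeakDual.eval_continuous w).continuousAt
      tendsto_map).map continuous_star.continuousAt tendsto_map
  convert hφw using 2
  · rw [← inner_conj_symm, ← InnerProductSpace.toDual_apply_apply,
      LinearIsometryEquiv.apply_symm_apply]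
    rfl
  · simp [g, toDual]

theorem tendsto_norm_atTop_of_tendsto_inner [CompleteSpace H] {u : α → H} {v : ι → H}
    {f : α → 𝕜} {l : Filter ι} (hv : ∀ a, Tendsto (fun i => ⟪u a, v i⟫_𝕜) l (𝓝 (f a)))
    (hf : ¬∃ F : H, ∀ a, f a = ⟪u a, F⟫_𝕜) :
    Tendsto (fun i => ‖v i‖) l atTop := by
  by_contra h
  obtain ⟨B, hB⟩ : ∃ B, ∃ᶠ i in l, ‖v i‖ < B := by
    simpa [tendsto_atTop] using h
  have : (l ⊓ 𝓟 {i | ‖v i‖ ≤ B}).NeBot :=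
    frequently_iff_neBot.1 (hB.mono fun i hi => hi.le)
  obtain ⟨F, hF⟩ := exists_clusterPt_inner_of_eventually_norm_le (𝕜 := 𝕜)
    (l := l ⊓ 𝓟 {i | ‖v i‖ ≤ B}) (eventually_inf_principal.2 (.of_forall fun _ => id))
  exact hf ⟨F, fun a => (eq_of_nhds_neBot ((hF (u a)).mono ((hv a).mono_left inf_le_left))).symm⟩

theorem tendsto_norm_atTop_of_norm_sq_le_mul [CompleteSpace H] {u : α → H} {f : α → 𝕜}
    (hf : ¬∃ F : H, ∀ a, f a = ⟪u a, F⟫_𝕜) {l : Filter ι} {x : ι → α}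
    (hx : ∀ a, Tendsto (fun i => ⟪u a, u (x i)⟫_𝕜) l (𝓝 (f a))) {C : ℝ} (hC₀ : 0 < C)
    (hC : ∀ i, ‖u (x i)‖ ^ 2 ≤ C * ‖f (x i)‖ ^ 2) :
    Tendsto (fun i => ‖f (x i)‖) l atTop := by
  refine tendsto_atTop_mono (fun i => ?_)
    ((tendsto_norm_atTop_of_tendsto_inner hx hf).atTop_div_const (Real.sqrt_pos.2 hC₀))
  rw [div_le_iff₀' (Real.sqrt_pos.2 hC₀)]
  refine (sq_le_sq₀ (norm_nonneg _) (by positivity)).1 ?_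
  rw [mul_pow, Real.sq_sqrt hC₀.le]
  exact hC i

theorem tendsto_inner_zero_of_mem_closure_span {l : Filter ι} {v : ι → H} {C : ℝ}
    (hC : ∀ i, ‖v i‖ ≤ C) {u : α → H} (hu : ∀ a, Tendsto (fun i => ⟪v i, u a⟫_𝕜) l (𝓝 0))
    {w : H} (hw : w ∈ (Submodule.span 𝕜 (Set.range u)).topologicalClosure) :
    Tendsto (fun i => ⟪v i, w⟫_𝕜) l (𝓝 0) := by
  let N : Submodule 𝕜 H :=
    { carrier := {w | Tendsto (fun i => ⟪v i, w⟫_𝕜) l (𝓝 0)}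
      zero_mem' := by simpa using tendsto_const_nhds
      add_mem' := fun ha hb => by simpa [inner_add_right] using ha.add hb
      smul_mem' := fun c w hw => by simpa [inner_smul_right] using hw.const_mul c }
  have hlip : ∀ i, LipschitzWith C.toNNReal fun w => ⟪v i, w⟫_𝕜 := fun i =>
    LipschitzWith.of_dist_le_mul fun w w' => by
      rw [dist_eq_norm, dist_eq_norm, ← inner_sub_right, Real.coe_toNNReal']
      exact (norm_inner_le_norm _ _).trans
        (mul_le_mul_of_nonneg_right ((hC i).trans (le_max_left _ _)) (norm_nonneg _))
  have hN : IsClosed (N : Set H) :=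
    (LipschitzWith.uniformEquicontinuous _ _ hlip).equicontinuous.isClosed_setOfPred_tendsto
      continuous_const
  refine Submodule.topologicalClosure_minimal _ ?_ hN hw
  rw [Submodule.span_le]
  rintro - ⟨a, rfl⟩
  exact hu a

theorem tendsto_inner_div_zero_of_norm_sq_le_mul [CompleteSpace H] {l : Filter ι} (u : α → H)
    {x : ι → α} {c : ι → 𝕜} {C : ℝ} (hC : ∀ i, ‖u (x i)‖ ^ 2 ≤ C * ‖c i‖ ^ 2)
    (hu : ∀ a, Tendsto (fun i => ⟪u (x i), u a⟫_𝕜 / c i) l (𝓝 0)) (Q : H) :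
    Tendsto (fun i => ⟪u (x i), Q⟫_𝕜 / c i) l (𝓝 0) := by
  let S := (Submodule.span 𝕜 (Set.range u)).topologicalClosure
  have hS : ∀ a, u a ∈ S := fun a =>
    Submodule.le_topologicalClosure _ (Submodule.subset_span (Set.mem_range_self a))
  let v i := (star (c i))⁻¹ • u (x i)
  have hv : ∀ i w, ⟪v i, w⟫_𝕜 = ⟪u (x i), w⟫_𝕜 / c i := fun i w => by
    simp [v, inner_smul_left, div_eq_inv_mul]
  have hvC : ∀ i, ‖v i‖ ≤ √C := fun i => by
    rcases eq_or_ne (c i) 0 with hc | hc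
    · simp [v, hc]
    · refine (le_abs_self _).trans (Real.abs_le_sqrt ?_)
      rw [norm_smul, norm_inv, norm_star, mul_pow, inv_pow, inv_mul_le_iff₀ (by positivity)]
      exact (hC i).trans_eq (mul_comm _ _)
  -- Since `u (x i) ∈ S`, pairing with `Q` only sees its projection onto `S`.
  have hQ : ∀ i, ⟪u (x i), Q⟫_𝕜 = ⟪u (x i), S.starProjection Q⟫_𝕜 := fun i => by
    rw [← Submodule.inner_starProjection_left_eq_right,
      Submodule.starProjection_eq_self_iff.2 (hS _)]
  simpa only [hv, hQ] using tendsto_inner_zero_of_mem_closure_span hvC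
    (fun a => by simpa only [hv] using hu a) (S.starProjection_apply_mem Q)

theorem norm_inner_le_div_of_div_eq_inner {X Y : Type*} {k : X → X → 𝕜} {t : Y → Y → 𝕜}
    {φ : X → Y} {qv : X → H}
    (hqrep : ∀ x y, k x y / t (φ x) (φ y) = ⟪qv x, qv y⟫_𝕜) {b : ℝ} (hb : 0 < b)
    (hB : ∀ x y, b < ‖t x y‖) (x y : X) :
    ‖⟪qv x, qv y⟫_𝕜‖ ≤ ‖k x y‖ / b := by
  rw [← hqrep, norm_div]
  exact div_le_div_of_nonneg_left (norm_nonneg _) hb (hB _ _).le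

end InnerProductSpace

theorem abstract_julia_caratheodory_key_general
    {X Y : Type*}
    {Hk : Type*} [NormedAddCommGroup Hk] [InnerProductSpace ℂ Hk] [CompleteSpace Hk]
    {Hq : Type*} [NormedAddCommGroup Hq] [InnerProductSpace ℂ Hq] [CompleteSpace Hq]
    (kv : X → Hk) (k : X → X → ℂ) (hkrep : ∀ x y, k x y = ⟪kv x, kv y⟫_ℂ)
    (t : Y → Y → ℂ)
    (φ : X → Y)
    (qv : X → Hq) (hqrep : ∀ x y, k x y / t (φ x) (φ y) = ⟪qv x, qv y⟫_ℂ)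
    -- condition (B)
    (b : ℝ) (hb : 0 < b) (hB : ∀ x y : Y, b < ‖t x y‖)
    -- `λ ∈ ∂_t Y` with boundary function `tL`
    (tL : Y → ℂ)
    (hLbd : ∃ y : ℕ → Y, ∀ z, Tendsto (fun n => t z (y n)) atTop (nhds (tL z)))
    -- condition (C) for `λ`
    (hC : ∀ y : ℕ → Y, Tendsto (fun n => ‖tL (y n)‖) atTop atTop →
      ∀ z, Tendsto (fun n => t z (y n)) atTop (nhds (tL z)))
    -- `ξ ∈ ∂_k X` with boundary function `kξ`
    (kξ : X → ℂ)
    (hξnotin : ¬ ∃ F : Hk, ∀ y, kξ y = ⟪kv y, F⟫_ℂ)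
    -- `q_ξ ∈ H(k/(t∘φ))`
    (hqξ : ∃ Q : Hq, ∀ x, kξ x / tL (φ x) = ⟪qv x, Q⟫_ℂ) :
    ∀ (x : ℕ → X) (M : ℝ), 0 < M →
      (∀ y, Tendsto (fun n => k y (x n)) atTop (nhds (kξ y))) →
      (∀ n, (k (x n) (x n)).re ≤ M * ‖kξ (x n)‖ ^ 2) →
      Tendsto (fun n => ‖tL (φ (x n))‖) atTop atTop ∧
        ∀ z, Tendsto (fun n => t z (φ (x n))) atTop (nhds (tL z)) := by
  intro x M hM hconv hhoro
  obtain ⟨Q, hQ⟩ := hqξ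
  have hkξ : Tendsto (fun n => ‖kξ (x n)‖) atTop atTop := by
    refine tendsto_norm_atTop_of_norm_sq_le_mul hξnotin (by simpa only [hkrep] using hconv) hM
      fun n => ?_
    rw [← inner_self_eq_norm_sq (𝕜 := ℂ), ← hkrep]
    exact hhoro n
  have hqv : ∀ n, ‖qv (x n)‖ ^ 2 ≤ M / b * ‖kξ (x n)‖ ^ 2 := fun n => by
    rw [← inner_self_eq_norm_sq (𝕜 := ℂ), inner_self_re_eq_norm, div_mul_eq_mul_div]
    refine (norm_inner_le_div_of_div_eq_inner hqrep hb hB _ _).trans ?_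
    gcongr
    rw [hkrep, ← inner_self_re_eq_norm, ← hkrep]
    exact hhoro n
  have hvanish : ∀ z, Tendsto (fun n => ⟪qv (x n), qv z⟫_ℂ / kξ (x n)) atTop (𝓝 0) := fun z => by
    refine squeeze_zero_norm (fun n => ?_)
      ((hkξ.inv_tendsto_atTop.mul ((hconv z).norm.div_const b)).trans (by simp))
    rw [norm_div, div_eq_inv_mul, norm_inner_symm]
    exact mul_le_mul_of_nonneg_left (norm_inner_le_div_of_div_eq_inner hqrep hb hB _ _)
      (by positivity)
  have htL : ∀ y, tL y ≠ 0 := fun y => by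
    obtain ⟨y', hy'⟩ := hLbd
    exact norm_pos_iff.1 (hb.trans_le (ge_of_tendsto' (hy' y).norm fun n => (hB _ _).le))
  have htop : Tendsto (fun n => ‖tL (φ (x n))‖) atTop atTop := by
    refine tendsto_norm_atTop_of_tendsto_inv (fun n => htL _)
      ((tendsto_inner_div_zero_of_norm_sq_le_mul qv hqv hvanish Q).congr' ?_)
    filter_upwards [hkξ.eventually_gt_atTop 0] with n hn
    rw [← hQ, div_div_cancel_left' (norm_pos_iff.1 hn)]
  exact ⟨htop, hC _ htop⟩

/-- abstract Julia–Carathéodory, key implication.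
`k`, `t` are reproducing kernels on `X`, `Y`, modelled by Hilbert spaces with kernel
vectors (`k x y = ⟪kv x, kv y⟫`, etc.).  `t` satisfies
(B) `|t(x,y)| > b > 0`, and (C) if `|t_λ(y_n)| → ∞` then `y_n →_t λ` (the `t`-kernel
functions at `y_n` converge pointwise to `t_λ`).  `φ ∈ Fact(k,t)` is witnessed by the
quotient kernel `q = k/(t∘φ)` being realized by a Hilbert space `Hq` with kernel vectors
`qv`.  `ξ ∈ ∂_k X` with boundary function `kξ` (a pointwise limit of `k`-kernel functions
not belonging to `H(k)`), `λ ∈ ∂_t Y` with boundary function `tL`, and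
`q_ξ = kξ / (tL ∘ φ)` belongs to `H(q)`.  Then along every sequence `x_n →_k ξ` lying in
a horocyclic region `E_k(M,ξ)`, one has `|tL (φ (x_n))| → ∞` and hence `φ (x_n) →_t λ`. -/
theorem abstract_julia_caratheodory_key
    {X Y : Type*} [Nonempty X] [Nonempty Y]
    {Hk : Type*} [NormedAddCommGroup Hk] [InnerProductSpace ℂ Hk] [CompleteSpace Hk]
    {Ht : Type*} [NormedAddCommGroup Ht] [InnerProductSpace ℂ Ht] [CompleteSpace Ht]
    {Hq : Type*} [NormedAddCommGroup Hq] [InnerProductSpace ℂ Hq] [CompleteSpace Hq]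
    (kv : X → Hk) (k : X → X → ℂ) (hkrep : ∀ x y, k x y = ⟪kv x, kv y⟫_ℂ)
    (tv : Y → Ht) (t : Y → Y → ℂ) (htrep : ∀ x y, t x y = ⟪tv x, tv y⟫_ℂ)
    (φ : X → Y)
    (qv : X → Hq) (hqrep : ∀ x y, k x y / t (φ x) (φ y) = ⟪qv x, qv y⟫_ℂ)
    -- condition (B)
    (b : ℝ) (hb : 0 < b) (hB : ∀ x y : Y, b < ‖t x y‖)
    -- `λ ∈ ∂_t Y` with boundary function `tL`
    (tL : Y → ℂ)
    (hLbd : ∃ y : ℕ → Y, ∀ z, Tendsto (fun n => t z (y n)) atTop (nhds (tL z)))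
    (hLnotin : ¬ ∃ G : Ht, ∀ z, tL z = ⟪tv z, G⟫_ℂ)
    -- condition (C) for `λ`
    (hC : ∀ y : ℕ → Y, Tendsto (fun n => ‖tL (y n)‖) atTop atTop →
      ∀ z, Tendsto (fun n => t z (y n)) atTop (nhds (tL z)))
    -- `ξ ∈ ∂_k X` with boundary function `kξ`
    (kξ : X → ℂ)
    (hξbd : ∃ x : ℕ → X, ∀ y, Tendsto (fun n => k y (x n)) atTop (nhds (kξ y)))
    (hξnotin : ¬ ∃ F : Hk, ∀ y, kξ y = ⟪kv y, F⟫_ℂ)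
    -- `q_ξ ∈ H(k/(t∘φ))`
    (hqξ : ∃ Q : Hq, ∀ x, kξ x / tL (φ x) = ⟪qv x, Q⟫_ℂ) :
    ∀ (x : ℕ → X) (M : ℝ), 0 < M →
      (∀ y, Tendsto (fun n => k y (x n)) atTop (nhds (kξ y))) →
      (∀ n, (k (x n) (x n)).re ≤ M * ‖kξ (x n)‖ ^ 2) →
      Tendsto (fun n => ‖tL (φ (x n))‖) atTop atTop ∧
        ∀ z, Tendsto (fun n => t z (φ (x n))) atTop (nhds (tL z)) :=
  abstract_julia_caratheodory_key_general kv k hkrep t φ qv hqrep b hb hB tL hLbd hC kξ hξnotin hqξ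
end

section
/- (Abstract Julia's lemma) Let k be a reproducing kernel on X, φ : X → X with q = k/(k∘φ) a positive semidefinite kernel. Suppose ξ ∈ ∂_k X with boundary function k_ξ and λ ∈ ∂_k X with boundary function k_λ are such that q_ξ(x) = k_ξ(x)/k_λ(φ(x)) belongs to H(q) with ‖q_ξ‖² ≤ c. Then for all x ∈ X with k(x,y) ≠ 0 appropriately: k(φ(x),φ(x))/|k_λ(φ(x))|² ≤ c · k(x,x)/|k_ξ(x)|². In particular φ maps the horocycle E_k(M,ξ) = {x : k(x,x) ≤ M|k_ξ(x)|²} into E_k(cM,λ). -/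
/-!
Evaluating `q_ξ = kξ / (kL ∘ φ)` at `x` is the inner product with the kernel vector `q_x`, so
Cauchy–Schwarz gives `|kξ x / kL (φ x)|² ≤ ‖q_ξ‖² q(x,x) ≤ c k(x,x) / k(φ x, φ x)`.
Clearing the (positive) denominators is the Julia inequality, and the horocycle inclusion
follows by inserting `k(x,x) ≤ M |kξ x|²`.
-/

open scoped InnerProductSpace

namespace AbstractJulia

variable {H : Type*} [NormedAddCommGroup H] [InnerProductSpace ℂ H]

lemma norm_sq_eq_re_div_re_of_div_eq_inner {a b : ℂ} {v : H} (ha : a.im = 0) (hb : b.im = 0)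
    (h : a / b = ⟪v, v⟫_ℂ) : ‖v‖ ^ 2 = a.re / b.re := by
  have ha' : a = (a.re : ℂ) := Complex.ext (by simp) (by simp [ha])
  have hb' : b = (b.re : ℂ) := Complex.ext (by simp) (by simp [hb])
  rw [← inner_self_eq_norm_sq (𝕜 := ℂ), ← h, ha', hb', ← Complex.ofReal_div]
  rfl

lemma norm_sq_le_of_eq_inner {z : ℂ} {v Q : H} {c : ℝ} (hz : z = ⟪v, Q⟫_ℂ)
    (hQ : ‖Q‖ ^ 2 ≤ c) : ‖z‖ ^ 2 ≤ c * ‖v‖ ^ 2 :=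
  calc ‖z‖ ^ 2 ≤ (‖v‖ * ‖Q‖) ^ 2 := by
        rw [hz]; gcongr; exact norm_inner_le_norm v Q
    _ = ‖Q‖ ^ 2 * ‖v‖ ^ 2 := by ring
    _ ≤ c * ‖v‖ ^ 2 := by gcongr

lemma div_sq_le_mul_div_sq_of_div_sq_le {a b s t c : ℝ} (hb : 0 < b) (hs : 0 < s) (ht : 0 < t)
    (h : (s / t) ^ 2 ≤ c * (a / b)) : b / t ^ 2 ≤ c * (a / s ^ 2) := by
  rw [div_pow, mul_div_assoc', div_le_div_iff₀ (by positivity) hb] at h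
  rw [mul_div_assoc', div_le_div_iff₀ (by positivity) (by positivity)]
  nlinarith

end AbstractJulia

open AbstractJulia in
theorem abstract_julia_lemma_general
    {X : Type*}
    {Hq : Type*} [NormedAddCommGroup Hq] [InnerProductSpace ℂ Hq]
    (k : X → X → ℂ) (φ : X → X)
    (qv : X → Hq) (hqrep : ∀ x y, k x y / k (φ x) (φ y) = ⟪qv x, qv y⟫_ℂ)
    (hdiag_im : ∀ x, (k x x).im = 0) (hdiag_pos : ∀ x, 0 < (k x x).re)
    (kξ : X → ℂ) (kL : X → ℂ)
    (hkξ : ∀ x, kξ x ≠ 0) (hkL : ∀ x, kL x ≠ 0)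
    (c : ℝ)
    (Q : Hq) (hQ : ∀ x, kξ x / kL (φ x) = ⟪qv x, Q⟫_ℂ) (hQn : ‖Q‖ ^ 2 ≤ c) :
    (∀ x : X, (k (φ x) (φ x)).re / ‖kL (φ x)‖ ^ 2 ≤
        c * ((k x x).re / ‖kξ x‖ ^ 2)) ∧
      ∀ M : ℝ, 0 < M → ∀ x : X,
        (k x x).re ≤ M * ‖kξ x‖ ^ 2 →
        (k (φ x) (φ x)).re ≤ c * M * ‖kL (φ x)‖ ^ 2 := by
  have julia : ∀ x, (k (φ x) (φ x)).re / ‖kL (φ x)‖ ^ 2 ≤ c * ((k x x).re / ‖kξ x‖ ^ 2) := by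
    intro x
    have hcs := norm_sq_le_of_eq_inner (hQ x) hQn
    rw [norm_sq_eq_re_div_re_of_div_eq_inner (hdiag_im x) (hdiag_im (φ x)) (hqrep x x),
      norm_div] at hcs
    exact div_sq_le_mul_div_sq_of_div_sq_le (hdiag_pos (φ x)) (norm_pos_iff.mpr (hkξ x))
      (norm_pos_iff.mpr (hkL (φ x))) hcs
  refine ⟨julia, fun M _ x hx => ?_⟩
  have hc : 0 ≤ c := (sq_nonneg ‖Q‖).trans hQn
  have hξ : 0 < ‖kξ x‖ ^ 2 := by have := hkξ x; positivity
  have hL : 0 < ‖kL (φ x)‖ ^ 2 := by have := hkL (φ x); positivity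
  rw [← div_le_iff₀ hL]
  calc (k (φ x) (φ x)).re / ‖kL (φ x)‖ ^ 2 ≤ c * ((k x x).re / ‖kξ x‖ ^ 2) := julia x
    _ ≤ c * M := by gcongr; exact (div_le_iff₀ hξ).mpr hx

/-- abstract Julia's lemma.  Let `k` be a reproducing kernel on `X` and
`φ : X → X` such that the quotient kernel `q = k/(k∘φ)` is positive semidefinite,
realized by a Hilbert space `Hq` with kernel vectors `qv`
(`q x y = k x y / k (φ x) (φ y) = ⟪qv x, qv y⟫`).  Suppose the boundary functions
`kξ` (of `ξ ∈ ∂_k X`) and `kL` (of `λ ∈ ∂_k X`) are such that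
`q_ξ = kξ / (kL ∘ φ)` belongs to `H(q)` with squared norm at most `c`.  Assuming the
diagonal values of `k` are real and positive and the relevant quantities are nonzero,
for every `x ∈ X`:
`k(φ x, φ x)/|kL (φ x)|² ≤ c · k(x,x)/|kξ x|²`; in particular `φ` maps each horocycle
`E_k(M,ξ) = {x : k(x,x) ≤ M |kξ x|²}` into `E_k(cM, λ)`. -/
theorem abstract_julia_lemma
    {X : Type*} [Nonempty X]
    {Hq : Type*} [NormedAddCommGroup Hq] [InnerProductSpace ℂ Hq] [CompleteSpace Hq]
    (k : X → X → ℂ) (φ : X → X)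
    (qv : X → Hq) (hqrep : ∀ x y, k x y / k (φ x) (φ y) = ⟪qv x, qv y⟫_ℂ)
    (hdiag_im : ∀ x, (k x x).im = 0) (hdiag_pos : ∀ x, 0 < (k x x).re)
    (kξ : X → ℂ) (kL : X → ℂ)
    (hkξ : ∀ x, kξ x ≠ 0) (hkL : ∀ x, kL x ≠ 0)
    (c : ℝ) (hc : 0 ≤ c)
    (Q : Hq) (hQ : ∀ x, kξ x / kL (φ x) = ⟪qv x, Q⟫_ℂ) (hQn : ‖Q‖ ^ 2 ≤ c) :
    (∀ x : X, (k (φ x) (φ x)).re / ‖kL (φ x)‖ ^ 2 ≤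
        c * ((k x x).re / ‖kξ x‖ ^ 2)) ∧
      ∀ M : ℝ, 0 < M → ∀ x : X,
        (k x x).re ≤ M * ‖kξ x‖ ^ 2 →
        (k (φ x) (φ x)).re ≤ c * M * ‖kL (φ x)‖ ^ 2 :=
  abstract_julia_lemma_general k φ qv hqrep hdiag_im hdiag_pos kξ kL hkξ hkL c Q hQ hQn
end

section
/- (Iteration/Denjoy–Wolff direction) Let k be a reproducing kernel on X with |k(x,y)| > b > 0 for all x,y, satisfying: if |k_ξ(x_n)| → ∞ then x_n →_k ξ. Let φ : X → X be a composition factor of k, ξ ∈ ∂_k X with boundary function k_ξ, and suppose the Julia inequality holds with constant c < 1 and λ = ξ, i.e., φ(E_k(M,ξ)) ⊆ E_k(cM,ξ) for all M > 0, where E_k(M,ξ) = {x : k(x,x) ≤ M|k_ξ(x)|²}. Then for every x ∈ X the iterates satisfy φⁿ(x) →_k ξ; in particular φ has no fixed point in X. -/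
/-!
If `x` lies in the horocycle `E_k(M, ξ)`, the Julia inequality puts `φⁿ(x)` in `E_k(cⁿM, ξ)`, so
`b < k(φⁿx, φⁿx) ≤ cⁿ M |k_ξ(φⁿx)|²`. As `cⁿ M → 0`, this forces `|k_ξ(φⁿx)| → ∞`, and the
isolated-singularity condition turns this into `φⁿ(x) →_k ξ`. A fixed point would make
`|k_ξ(φⁿx)|` constant.
-/

open scoped InnerProductSpace
open Filter

open Topology

theorem tendsto_atTop_of_le_mul_of_tendsto_nhdsGT_zero {α : Type*} {l : Filter α} {b : ℝ}
    {u t : α → ℝ} (hb : 0 < b) (hu : Tendsto u l (𝓝[>] 0)) (h : ∀ a, b ≤ u a * t a) :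
    Tendsto t l atTop := by
  have hdiv : Tendsto (fun a => b / u a) l atTop := by
    simpa [div_eq_mul_inv] using hu.inv_tendsto_nhdsGT_zero.const_mul_atTop hb
  refine tendsto_atTop_mono' l ?_ hdiv
  filter_upwards [hu self_mem_nhdsWithin] with a (ha : 0 < u a)
  rw [div_le_iff₀' ha]
  exact h a

section Julia

variable {X : Type*} {K g : X → ℝ} {φ : X → X} {c : ℝ}

theorem le_pow_mul_iterate_of_julia (hc : 0 < c)
    (hjulia : ∀ M : ℝ, 0 < M → ∀ x, K x ≤ M * g x → K (φ x) ≤ c * M * g (φ x))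
    {M : ℝ} (hM : 0 < M) {x : X} (hx : K x ≤ M * g x) :
    ∀ n : ℕ, K (φ^[n] x) ≤ c ^ n * M * g (φ^[n] x)
  | 0 => by simpa using hx
  | n + 1 => by
    rw [Function.iterate_succ_apply', pow_succ', mul_assoc c]
    exact hjulia _ (by positivity) _ (le_pow_mul_iterate_of_julia hc hjulia hM hx n)

theorem tendsto_atTop_iterate_of_julia {b : ℝ} (hb : 0 < b) (hK : ∀ x, b < K x)
    (hc0 : 0 ≤ c) (hc1 : c < 1)
    (hjulia : ∀ M : ℝ, 0 < M → ∀ x, K x ≤ M * g x → K (φ x) ≤ c * M * g (φ x))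
    (x : X) (hgx : 0 < g x) :
    Tendsto (fun n => g (φ^[n] x)) atTop atTop := by
  set M := K x / g x
  have hM : 0 < M := div_pos (hb.trans (hK x)) hgx
  have hx : K x ≤ M * g x := (div_mul_cancel₀ _ hgx.ne').ge
  have hc : 0 < c := by
    refine hc0.lt_of_ne fun hc => ?_
    have hφx := hjulia M hM x hx
    rw [← hc, zero_mul, zero_mul] at hφx
    exact (hb.trans (hK (φ x))).not_ge hφx
  have hu : Tendsto (fun n => c ^ n * M) atTop (𝓝[>] 0) :=
    tendsto_nhdsWithin_of_tendsto_nhds_of_eventually_within _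
      (by simpa using (tendsto_pow_atTop_nhds_zero_of_lt_one hc0 hc1).mul_const M)
      (Eventually.of_forall fun n => Set.mem_Ioi.2 (by positivity))
  exact tendsto_atTop_of_le_mul_of_tendsto_nhdsGT_zero hb hu fun n =>
    (hK _).le.trans (le_pow_mul_iterate_of_julia hc hjulia hM hx n)

end Julia

theorem iteration_to_boundary_general
    {X : Type*}
    {Hk : Type*} [NormedAddCommGroup Hk] [InnerProductSpace ℂ Hk]
    (kv : X → Hk) (k : X → X → ℂ) (hkrep : ∀ x y, k x y = ⟪kv x, kv y⟫_ℂ)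
    (b : ℝ) (hb : 0 < b) (hB : ∀ x y : X, b < ‖k x y‖)
    (kξ : X → ℂ)
    (hξbd : ∃ x : ℕ → X, ∀ y, Tendsto (fun n => k y (x n)) atTop (nhds (kξ y)))
    (hC : ∀ x : ℕ → X, Tendsto (fun n => ‖kξ (x n)‖) atTop atTop →
      ∀ y, Tendsto (fun n => k y (x n)) atTop (nhds (kξ y)))
    (φ : X → X)
    (c : ℝ) (hc0 : 0 ≤ c) (hc1 : c < 1)
    (hjulia : ∀ M : ℝ, 0 < M → ∀ x : X,
      (k x x).re ≤ M * ‖kξ x‖ ^ 2 →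
      (k (φ x) (φ x)).re ≤ c * M * ‖kξ (φ x)‖ ^ 2) :
    (∀ x : X, ∀ y : X,
        Tendsto (fun n => k y (φ^[n] x)) atTop (nhds (kξ y))) ∧
      ∀ x : X, φ x ≠ x := by
  obtain ⟨s, hs⟩ := hξbd
  have hdiag : ∀ x, b < (k x x).re := fun x => by
    simpa only [hkrep, ← inner_self_re_eq_norm, RCLike.re_to_complex] using hB x x
  have hkξ : ∀ y, 0 < ‖kξ y‖ ^ 2 := fun y =>
    pow_pos (hb.trans_le (ge_of_tendsto' (hs y).norm fun n => (hB y (s n)).le)) 2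
  have hiter : ∀ x, Tendsto (fun n => ‖kξ (φ^[n] x)‖) atTop atTop := fun x => by
    have hsq := tendsto_atTop_iterate_of_julia hb hdiag hc0 hc1 hjulia x (hkξ x)
    exact (Real.tendsto_sqrt_atTop.comp hsq).congr fun n => Real.sqrt_sq (norm_nonneg _)
  refine ⟨fun x => hC _ (hiter x), fun x hx => ?_⟩
  have hconst := hiter x
  simp only [Function.iterate_fixed hx] at hconst
  exact not_tendsto_const_atTop _ _ hconst

/-- iteration / Denjoy–Wolff direction.  Let `k` be a reproducing kernel
on `X` (modelled by a Hilbert space `Hk` with kernel vectors `kv`) satisfying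
`|k(x,y)| > b > 0` and the isolated-singularity condition: if `|kξ (x_n)| → ∞` then
`x_n →_k ξ` (the kernel functions at `x_n` converge pointwise to `kξ`).  Let
`φ : X → X` be a composition factor of `k`, `ξ ∈ ∂_k X` with boundary function `kξ`
(a pointwise limit of kernel functions not belonging to `H(k)`), and suppose the Julia
inequality holds with constant `c < 1` and `λ = ξ`:
`φ(E_k(M,ξ)) ⊆ E_k(cM,ξ)` for all `M > 0`.  Then the iterates satisfy
`φⁿ(x) →_k ξ` for every `x ∈ X`; in particular `φ` has no fixed point in `X`. -/
theorem iteration_to_boundary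
    {X : Type*} [Nonempty X]
    {Hk : Type*} [NormedAddCommGroup Hk] [InnerProductSpace ℂ Hk] [CompleteSpace Hk]
    (kv : X → Hk) (k : X → X → ℂ) (hkrep : ∀ x y, k x y = ⟪kv x, kv y⟫_ℂ)
    (b : ℝ) (hb : 0 < b) (hB : ∀ x y : X, b < ‖k x y‖)
    (kξ : X → ℂ)
    (hξbd : ∃ x : ℕ → X, ∀ y, Tendsto (fun n => k y (x n)) atTop (nhds (kξ y)))
    (hξnotin : ¬ ∃ F : Hk, ∀ y, kξ y = ⟪kv y, F⟫_ℂ)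
    (hC : ∀ x : ℕ → X, Tendsto (fun n => ‖kξ (x n)‖) atTop atTop →
      ∀ y, Tendsto (fun n => k y (x n)) atTop (nhds (kξ y)))
    (φ : X → X)
    (hφ : IsPSDKernel (fun x y => k x y / k (φ x) (φ y)))
    (c : ℝ) (hc0 : 0 ≤ c) (hc1 : c < 1)
    (hjulia : ∀ M : ℝ, 0 < M → ∀ x : X,
      (k x x).re ≤ M * ‖kξ x‖ ^ 2 →
      (k (φ x) (φ x)).re ≤ c * M * ‖kξ (φ x)‖ ^ 2) :
    (∀ x : X, ∀ y : X,
        Tendsto (fun n => k y (φ^[n] x)) atTop (nhds (kξ y))) ∧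
      ∀ x : X, φ x ≠ x :=
  iteration_to_boundary_general kv k hkrep b hb hB kξ hξbd hC φ c hc0 hc1 hjulia
end

section
/- Let 0 < α < 1, ζ ∈ 𝕋, and let f : 𝔻 → ℂ be analytic with nontangential limit f(ζ) at ζ. If f'(z)·(1 − z·conj(ζ))^{1−α} → σ·conj(ζ)·α as z → ζ nontangentially (for some σ ∈ ℂ), then (f(ζ) − f(z))/(1 − z·conj(ζ))^{α} → σ as z → ζ nontangentially. -/
/-!
Fix `z` in a Stolz region and integrate `f'` along the segment `γ t = z + t (ζ - z)`, which stays
in the region. Since `1 - γ t * conj ζ = (1 - t) (1 - z * conj ζ)` and `ζ - z = ζ (1 - z * conj ζ)`,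
the quotient `(f ζ - f z) / (1 - z * conj ζ)^α` is the improper integral
`∫₀¹ ζ f'(γ t) (1 - γ t * conj ζ)^(1-α) (1 - t)^(α-1) dt`, its value at the endpoint `t = 1` being
the nontangential limit `f ζ`. Once `z` is close to `ζ` so is the whole segment, where the middle
factor is then within any prescribed `η` of `σ conj ζ α`; as `∫₀¹ (1 - t)^(α-1) dt = 1/α`, the quotient is within
`η / α` of `σ`.
-/

open Filter

/-- The nontangential (Stolz) approach region `R_M = {z ∈ 𝔻 : |ζ − z| ≤ M (1 − |z|)}`. -/
def StolzRegion (ζ : ℂ) (M : ℝ) : Set ℂ :=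
  {z : ℂ | ‖z‖ < 1 ∧ ‖ζ - z‖ ≤ M * (1 - ‖z‖)}

/-- `g` has nontangential limit `L` at `ζ`: it tends to `L` along every Stolz region. -/
def NTLimit (g : ℂ → ℂ) (ζ L : ℂ) : Prop :=
  ∀ M : ℝ, 0 < M → Tendsto g (nhdsWithin ζ (StolzRegion ζ M)) (nhds L)

open Set Topology MeasureTheory AffineMap ComplexConjugate

theorem Complex.ofReal_mul_cpow {r : ℝ} (hr : 0 ≤ r) (x c : ℂ) :
    ((r : ℂ) * x) ^ c = (r : ℂ) ^ c * x ^ c := by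
  rcases eq_or_ne c 0 with rfl | hc
  · simp
  rcases hr.eq_or_lt with rfl | hr
  · simp [zero_cpow hc]
  rcases eq_or_ne x 0 with rfl | hx
  · simp [zero_cpow hc]
  have hr' : (r : ℂ) ≠ 0 := ofReal_ne_zero.mpr hr.ne'
  rw [cpow_def_of_ne_zero (mul_ne_zero hr' hx), log_ofReal_mul hr hx, ofReal_log hr.le,
    add_mul, exp_add, ← cpow_def_of_ne_zero hr', ← cpow_def_of_ne_zero hx]

theorem intervalIntegrable_one_sub_rpow {α : ℝ} (hα : 0 < α) :
    IntervalIntegrable (fun t : ℝ => (1 - t) ^ (α - 1)) volume 0 1 := by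
  simpa using (intervalIntegral.intervalIntegrable_rpow' (a := 1) (b := 0) (r := α - 1)
    (by linarith)).comp_sub_left 1

theorem integral_one_sub_rpow {α : ℝ} (hα : 0 < α) :
    ∫ t in (0 : ℝ)..1, (1 - t) ^ (α - 1) = 1 / α := by
  rw [intervalIntegral.integral_comp_sub_left (fun t => t ^ (α - 1)),
    integral_rpow (Or.inl (by linarith))]
  simp [hα.ne']

theorem intervalIntegrable_and_norm_integral_sub_le {α η : ℝ} (hα : 0 < α) {φ : ℝ → ℂ} {c : ℂ}
    (hφ : ContinuousOn φ (Ioo 0 1))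
    (hle : ∀ t ∈ Ioo (0 : ℝ) 1, ‖φ t - c * ((1 - t) ^ (α - 1) : ℝ)‖ ≤ η * (1 - t) ^ (α - 1)) :
    IntervalIntegrable φ volume 0 1 ∧ ‖(∫ t in (0 : ℝ)..1, φ t) - c / α‖ ≤ η / α := by
  have hw := intervalIntegrable_one_sub_rpow hα
  have hwℂ : IntervalIntegrable (fun t : ℝ => (((1 - t) ^ (α - 1) : ℝ) : ℂ)) volume 0 1 :=
    ⟨hw.1.ofReal, hw.2.ofReal⟩
  have hcw := hwℂ.const_mul c
  have hle_ae : ∀ᵐ t ∂volume.restrict (Ioc (0 : ℝ) 1),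
      ‖φ t - c * ((1 - t) ^ (α - 1) : ℝ)‖ ≤ η * (1 - t) ^ (α - 1) := by
    rw [← Measure.restrict_congr_set Ioo_ae_eq_Ioc]
    exact ae_restrict_of_forall_mem measurableSet_Ioo hle
  have hdiff : IntervalIntegrable (fun t => φ t - c * ((1 - t) ^ (α - 1) : ℝ)) volume 0 1 := by
    refine (hw.const_mul η).mono_fun' ?_ (by rwa [uIoc_of_le zero_le_one])
    have hwc : ContinuousOn (fun t : ℝ => (1 - t) ^ (α - 1)) (Ioo 0 1) :=
      ContinuousOn.rpow_const (by fun_prop) fun t ht => Or.inl (sub_ne_zero.mpr ht.2.ne')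
    rw [uIoc_of_le zero_le_one, ← Measure.restrict_congr_set Ioo_ae_eq_Ioc]
    exact (hφ.sub (continuousOn_const.mul (Complex.continuous_ofReal.comp_continuousOn
      hwc))).aestronglyMeasurable measurableSet_Ioo
  have hint : IntervalIntegrable φ volume 0 1 := by simpa using hdiff.add hcw
  refine ⟨hint, ?_⟩
  have hcint : ∫ t in (0 : ℝ)..1, c * ((1 - t) ^ (α - 1) : ℝ) = c / α := by
    rw [intervalIntegral.integral_const_mul, intervalIntegral.integral_ofReal,
      integral_one_sub_rpow hα]
    push_cast; ring
  calc ‖(∫ t in (0 : ℝ)..1, φ t) - c / α‖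
      = ‖∫ t in (0 : ℝ)..1, (φ t - c * ((1 - t) ^ (α - 1) : ℝ))‖ := by
        rw [intervalIntegral.integral_sub hint hcw, hcint]
    _ ≤ ∫ t in (0 : ℝ)..1, η * (1 - t) ^ (α - 1) :=
        intervalIntegral.norm_integral_le_of_norm_le zero_le_one
          ((ae_restrict_iff' measurableSet_Ioc).mp hle_ae) (hw.const_mul η)
    _ = η / α := by rw [intervalIntegral.integral_const_mul, integral_one_sub_rpow hα, mul_one_div]

theorem lineMap_mem_stolzRegion {ζ z : ℂ} {M : ℝ} (hζ : ‖ζ‖ ≤ 1) (hz : z ∈ StolzRegion ζ M)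
    {t : ℝ} (ht : t ∈ Ico (0 : ℝ) 1) : lineMap z ζ t ∈ StolzRegion ζ M := by
  obtain ⟨hz1, hz2⟩ := hz
  obtain ⟨ht0, ht1⟩ := ht
  have hM : 0 ≤ M := nonneg_of_mul_nonneg_left ((norm_nonneg _).trans hz2) (by linarith)
  have hnorm : ‖lineMap z ζ t‖ ≤ (1 - t) * ‖z‖ + t := by
    rw [lineMap_apply_module]
    calc ‖(1 - t) • z + t • ζ‖ ≤ ‖(1 - t) • z‖ + ‖t • ζ‖ := norm_add_le _ _
      _ = (1 - t) * ‖z‖ + t * ‖ζ‖ := by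
        rw [norm_smul, norm_smul, Real.norm_of_nonneg (by linarith), Real.norm_of_nonneg ht0]
      _ ≤ (1 - t) * ‖z‖ + t := by nlinarith
  have hdist : ‖ζ - lineMap z ζ t‖ = (1 - t) * ‖ζ - z‖ := by
    rw [← dist_eq_norm, dist_comm, dist_lineMap_right, Real.norm_of_nonneg (by linarith),
      dist_comm, dist_eq_norm]
  refine ⟨by nlinarith, ?_⟩
  rw [hdist]
  nlinarith [mul_le_mul_of_nonneg_left hz2 (by linarith : (0 : ℝ) ≤ 1 - t)]

theorem one_sub_mul_conj_ne_zero {z ζ : ℂ} (hz : ‖z‖ < 1) (hζ : ‖ζ‖ ≤ 1) :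
    1 - z * conj ζ ≠ 0 := by
  intro h
  have h1 : ‖z * conj ζ‖ = 1 := by rw [← sub_eq_zero.mp h, norm_one]
  rw [norm_mul, Complex.norm_conj] at h1
  nlinarith [norm_nonneg z, norm_nonneg ζ]

theorem mul_conj_eq_one_of_norm_eq_one {ζ : ℂ} (hζ : ‖ζ‖ = 1) : ζ * conj ζ = 1 := by
  simp [Complex.mul_conj', hζ]

theorem one_sub_lineMap_mul_conj {ζ : ℂ} (hζ : ‖ζ‖ = 1) (z : ℂ) (t : ℝ) :
    1 - lineMap z ζ t * conj ζ = ((1 - t : ℝ) : ℂ) * (1 - z * conj ζ) := by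
  rw [lineMap_apply_module', Complex.real_smul]
  push_cast
  linear_combination (-(t : ℂ)) * mul_conj_eq_one_of_norm_eq_one hζ

theorem sub_eq_mul_one_sub_mul_conj {ζ : ℂ} (hζ : ‖ζ‖ = 1) (z : ℂ) :
    ζ - z = ζ * (1 - z * conj ζ) := by
  linear_combination z * mul_conj_eq_one_of_norm_eq_one hζ

theorem integral_deriv_comp_lineMap {f : ℂ → ℂ} {U : Set ℂ} (hU : IsOpen U)
    (hf : DifferentiableOn ℂ f U) {z ζ L : ℂ} (hseg : ∀ t ∈ Ico (0 : ℝ) 1, lineMap z ζ t ∈ U)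
    (hlim : Tendsto (fun t : ℝ => f (lineMap z ζ t)) (𝓝[<] 1) (𝓝 L))
    (hint : IntervalIntegrable (fun t : ℝ => deriv f (lineMap z ζ t) * (ζ - z)) volume 0 1) :
    ∫ t in (0 : ℝ)..1, deriv f (lineMap z ζ t) * (ζ - z) = L - f z := by
  have hderiv : ∀ t ∈ Ico (0 : ℝ) 1, HasDerivAt (fun t : ℝ => f (lineMap z ζ t))
      (deriv f (lineMap z ζ t) * (ζ - z)) t := fun t ht =>
    (hf.differentiableAt (hU.mem_nhds (hseg t ht))).hasDerivAt.comp t hasDerivAt_lineMap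
  refine intervalIntegral.integral_eq_sub_of_hasDerivAt_of_tendsto zero_lt_one
    (fun t ht => hderiv t (Ioo_subset_Ico_self ht)) hint ?_ hlim
  simpa using (hderiv 0 ⟨le_rfl, zero_lt_one⟩).continuousAt.tendsto.mono_left nhdsWithin_le_nhds

theorem mul_sub_div_cpow_eq {ζ z : ℂ} (hζ : ‖ζ‖ = 1) (hw : 1 - z * conj ζ ≠ 0) {t : ℝ}
    (ht : t < 1) (α : ℝ) (D : ℂ) :
    D * (ζ - z) / (1 - z * conj ζ) ^ (α : ℂ)
      = ζ * (D * (1 - lineMap z ζ t * conj ζ) ^ ((1 : ℂ) - α)) * ((1 - t) ^ (α - 1) : ℝ) := by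
  set w := 1 - z * conj ζ
  have hr : (0 : ℝ) < 1 - t := by linarith
  have hr' : ((1 - t : ℝ) : ℂ) ≠ 0 := Complex.ofReal_ne_zero.mpr hr.ne'
  have hwα : w ^ (α : ℂ) ≠ 0 := by simp [Complex.cpow_eq_zero_iff, hw]
  have hr1 : ((1 - t : ℝ) : ℂ) ^ ((1 : ℂ) - α) * ((1 - t : ℝ) : ℂ) ^ ((α - 1 : ℝ) : ℂ) = 1 := by
    rw [← Complex.cpow_add _ _ hr']; push_cast; ring_nf; exact Complex.cpow_zero _
  have hw1 : w ^ ((1 : ℂ) - α) * w ^ (α : ℂ) = w := by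
    rw [← Complex.cpow_add _ _ hw]; simp
  rw [one_sub_lineMap_mul_conj hζ, Complex.ofReal_mul_cpow hr.le, sub_eq_mul_one_sub_mul_conj hζ z,
    Complex.ofReal_cpow hr.le, div_eq_iff hwα]
  linear_combination (-(ζ * D * (w ^ ((1 : ℂ) - α) * w ^ (α : ℂ)))) * hr1 - ζ * D * hw1

theorem norm_div_cpow_sub_le_of_segment {α η : ℝ} (hα : 0 < α) {ζ : ℂ} (hζ : ‖ζ‖ = 1)
    {f : ℂ → ℂ} (hf : DifferentiableOn ℂ f (Metric.ball 0 1)) {M : ℝ} {fζ L : ℂ}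
    (hlim : Tendsto f (𝓝[StolzRegion ζ M] ζ) (𝓝 fζ)) {z : ℂ} (hz : z ∈ StolzRegion ζ M)
    (hη : ∀ t ∈ Ioo (0 : ℝ) 1,
      ‖deriv f (lineMap z ζ t) * (1 - lineMap z ζ t * conj ζ) ^ ((1 : ℂ) - α) - L‖ ≤ η) :
    ‖(fζ - f z) / (1 - z * conj ζ) ^ (α : ℂ) - ζ * L / α‖ ≤ η / α := by
  set w := 1 - z * conj ζ
  have hw : w ≠ 0 := one_sub_mul_conj_ne_zero hz.1 hζ.le
  have hwα : w ^ (α : ℂ) ≠ 0 := by simp [Complex.cpow_eq_zero_iff, hw]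
  have hγ_mem (t : ℝ) (ht : t ∈ Ico (0 : ℝ) 1) : lineMap z ζ t ∈ StolzRegion ζ M :=
    lineMap_mem_stolzRegion hζ.le hz ht
  have hγ_ball (t : ℝ) (ht : t ∈ Ico (0 : ℝ) 1) : lineMap z ζ t ∈ Metric.ball (0 : ℂ) 1 :=
    mem_ball_zero_iff.mpr (hγ_mem t ht).1
  have hγ_lim : Tendsto (lineMap z ζ : ℝ → ℂ) (𝓝[<] 1) (𝓝[StolzRegion ζ M] ζ) := by
    refine tendsto_nhdsWithin_iff.mpr ⟨?_, ?_⟩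
    · simpa using (lineMap_continuous (p := z) (q := ζ)).tendsto (1 : ℝ) |>.mono_left
        nhdsWithin_le_nhds
    · filter_upwards [Ioo_mem_nhdsLT zero_lt_one] with t ht using hγ_mem t (Ioo_subset_Ico_self ht)
  have hcont : ContinuousOn (fun t : ℝ => deriv f (lineMap z ζ t) * (ζ - z) / w ^ (α : ℂ))
      (Ioo 0 1) := by
    have hderiv := (hf.analyticOnNhd Metric.isOpen_ball).deriv.continuousOn
    exact ((hderiv.comp lineMap_continuous.continuousOn
      fun t ht => hγ_ball t (Ioo_subset_Ico_self ht)).mul continuousOn_const).div_const _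
  obtain ⟨hint, hbound⟩ := intervalIntegrable_and_norm_integral_sub_le hα (η := η) (c := ζ * L)
    hcont fun t ht => by
      rw [mul_sub_div_cpow_eq hζ hw ht.2, ← sub_mul, ← mul_sub, norm_mul, norm_mul, hζ, one_mul,
        Complex.norm_real, Real.norm_of_nonneg (Real.rpow_nonneg (by linarith [ht.2]) _)]
      exact mul_le_mul_of_nonneg_right (hη t ht) (Real.rpow_nonneg (by linarith [ht.2]) _)
  have hftc : ∫ t in (0 : ℝ)..1, deriv f (lineMap z ζ t) * (ζ - z) = fζ - f z :=
    integral_deriv_comp_lineMap Metric.isOpen_ball hf hγ_ball (hlim.comp hγ_lim)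
      (by simpa [div_mul_cancel₀ _ hwα] using hint.mul_const (w ^ (α : ℂ)))
  rwa [intervalIntegral.integral_div, hftc] at hbound

theorem weighted_derivative_to_difference_quotient_general
    (α : ℝ) (hα0 : 0 < α)
    (ζ : ℂ) (hζ : ‖ζ‖ = 1)
    (f : ℂ → ℂ) (hf : DifferentiableOn ℂ f (Metric.ball (0 : ℂ) 1))
    (fζ σ : ℂ)
    (hlim : NTLimit f ζ fζ)
    (hder : NTLimit (fun z => deriv f z * (1 - z * starRingEnd ℂ ζ) ^ ((1 : ℂ) - α))
      ζ (σ * starRingEnd ℂ ζ * α)) :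
    NTLimit (fun z => (fζ - f z) / (1 - z * starRingEnd ℂ ζ) ^ (α : ℂ)) ζ σ := by
  intro M hM
  rw [Metric.tendsto_nhdsWithin_nhds]
  intro ε hε
  obtain ⟨δ, hδ, hnear⟩ :=
    Metric.tendsto_nhdsWithin_nhds.mp (hder M hM) (ε * α / 2) (by positivity)
  refine ⟨δ, hδ, fun z hz hzδ => ?_⟩
  have hseg (t : ℝ) (ht : t ∈ Ioo (0 : ℝ) 1) :
      dist (lineMap z ζ t) ζ < δ := by
    rw [dist_lineMap_right, Real.norm_of_nonneg (by linarith [ht.2])]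
    nlinarith [ht.1, dist_nonneg (x := z) (y := ζ)]
  have hσ : ζ * (σ * conj ζ * α) / α = σ := by
    have hα : (α : ℂ) ≠ 0 := Complex.ofReal_ne_zero.mpr hα0.ne'
    field_simp
    linear_combination σ * mul_conj_eq_one_of_norm_eq_one hζ
  have hbound := norm_div_cpow_sub_le_of_segment hα0 hζ hf (hlim M hM) hz fun t ht => by
    rw [← dist_eq_norm]
    exact (hnear (lineMap_mem_stolzRegion hζ.le hz (Ioo_subset_Ico_self ht)) (hseg t ht)).le
  have hhalf : ε * α / 2 / α = ε / 2 := by field_simp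
  rw [hσ, hhalf] at hbound
  rw [dist_eq_norm]
  linarith

/-- let `0 < α < 1`, `ζ ∈ 𝕋`, and `f` analytic on `𝔻` with nontangential
limit `fζ` at `ζ`.  If `f'(z)(1 − z conj ζ)^{1−α} → σ conj ζ α` nontangentially, then
`(fζ − f z)/(1 − z conj ζ)^α → σ` nontangentially (principal branch powers). -/
theorem weighted_derivative_to_difference_quotient
    (α : ℝ) (hα0 : 0 < α) (hα1 : α < 1)
    (ζ : ℂ) (hζ : ‖ζ‖ = 1)
    (f : ℂ → ℂ) (hf : DifferentiableOn ℂ f (Metric.ball (0 : ℂ) 1))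
    (fζ σ : ℂ)
    (hlim : NTLimit f ζ fζ)
    (hder : NTLimit (fun z => deriv f z * (1 - z * starRingEnd ℂ ζ) ^ ((1 : ℂ) - α))
      ζ (σ * starRingEnd ℂ ζ * α)) :
    NTLimit (fun z => (fζ - f z) / (1 - z * starRingEnd ℂ ζ) ^ (α : ℂ)) ζ σ :=
  weighted_derivative_to_difference_quotient_general α hα0 ζ hζ f hf fζ σ hlim hder
end

section
/- Let 0 < α < 1, ζ ∈ 𝕋, and let f : 𝔻 → ℂ be analytic such that (f(ζ) − f(z))/(1 − z·conj(ζ))^{α} → σ as z → ζ nontangentially. Then f'(z)·(1 − z·conj(ζ))^{1−α} → σ·conj(ζ)·α as z → ζ nontangentially. -/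
open Filter

/-!
Subtracting the model term, `g = f(ζ) - f - σ (1 - z conj ζ)^α` is `o(|ζ - z|^α)` along every
Stolz region, and `g' = σ conj ζ α (1 - z conj ζ)^(α-1) - f'`. For `z ∈ R_M`, the circle about `z`
of radius `r = (1 - |z|)/2` lies in `R_{2M+1}` and on it `|ζ - w| ≤ (2M + 1) r`, while
`r ≤ |ζ - z| ≤ 2M r`. Cauchy's estimate `|g'(z)| ≤ max |g| / r` therefore turns
`g = o(|ζ - w|^α)` on `R_{2M+1}` into `g' = o(|ζ - z|^(α-1))` on `R_M`.
-/

open Metric Asymptotics Topology ComplexConjugate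

lemma closedBall_one_sub_norm_div_two_subset_ball {z : ℂ} (hz : ‖z‖ < 1) :
    closedBall z ((1 - ‖z‖) / 2) ⊆ ball 0 1 := by
  intro w hw
  rw [mem_closedBall, dist_eq_norm] at hw
  rw [mem_ball_zero_iff]
  linarith [norm_le_norm_add_norm_sub' w z]

namespace StolzRegion

variable {ζ z w : ℂ} {M : ℝ}

lemma nonneg (hz : z ∈ StolzRegion ζ M) : 0 ≤ M :=
  nonneg_of_mul_nonneg_left ((norm_nonneg _).trans hz.2) (by linarith [hz.1])

lemma norm_sub_le_of_mem_sphere (hz : z ∈ StolzRegion ζ M)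
    (hw : w ∈ sphere z ((1 - ‖z‖) / 2)) : ‖ζ - w‖ ≤ (2 * M + 1) * ((1 - ‖z‖) / 2) := by
  rw [mem_sphere_iff_norm] at hw
  calc ‖ζ - w‖ ≤ ‖ζ - z‖ + ‖z - w‖ := norm_sub_le_norm_sub_add_norm_sub ζ z w
    _ ≤ _ := by rw [norm_sub_rev z w, hw]; linarith [hz.2]

lemma sphere_subset (hz : z ∈ StolzRegion ζ M) :
    sphere z ((1 - ‖z‖) / 2) ⊆ StolzRegion ζ (2 * M + 1) := by
  intro w hw
  have hw_ball := closedBall_one_sub_norm_div_two_subset_ball hz.1 (sphere_subset_closedBall hw)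
  rw [mem_ball_zero_iff] at hw_ball
  have hr : (1 - ‖z‖) / 2 ≤ 1 - ‖w‖ := by
    rw [mem_sphere_iff_norm] at hw
    linarith [norm_le_norm_add_norm_sub' w z]
  exact ⟨hw_ball, (norm_sub_le_of_mem_sphere hz hw).trans
    (mul_le_mul_of_nonneg_left hr (by linarith [nonneg hz]))⟩

end StolzRegion

section CauchyEstimate

variable {g : ℂ → ℂ} {ζ z : ℂ} {M α ε : ℝ}

theorem norm_deriv_le_of_mem_stolzRegion (hα0 : 0 ≤ α) (hα1 : α ≤ 1) (hε : 0 ≤ ε)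
    (hg : DifferentiableOn ℂ g (ball 0 1)) (hz : z ∈ StolzRegion ζ M) (hzζ : z ≠ ζ)
    (hbound : ∀ w ∈ sphere z ((1 - ‖z‖) / 2), ‖g w‖ ≤ ε * ‖ζ - w‖ ^ α) :
    ‖deriv g z‖ ≤ ε * ((2 * M + 1) ^ α * (2 * M) ^ (1 - α)) * ‖ζ - z‖ ^ (α - 1) := by
  set r := (1 - ‖z‖) / 2
  have hr : 0 < r := half_pos (sub_pos.2 hz.1)
  have hζz : 0 < ‖ζ - z‖ := norm_pos_iff.2 (sub_ne_zero.2 hzζ.symm)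
  have hM : 0 < M := pos_of_mul_pos_left (hζz.trans_le hz.2) (sub_pos.2 hz.1).le
  have hcauchy : ‖deriv g z‖ ≤ ε * ((2 * M + 1) * r) ^ α / r := by
    refine Complex.norm_deriv_le_of_forall_mem_sphere_norm_le hr
      (hg.diffContOnCl_ball (closedBall_one_sub_norm_div_two_subset_ball hz.1)) fun w hw => ?_
    exact (hbound w hw).trans (mul_le_mul_of_nonneg_left (Real.rpow_le_rpow (norm_nonneg _)
      (StolzRegion.norm_sub_le_of_mem_sphere hz hw) hα0) hε)
  have hr_pow : r ^ (α - 1) ≤ (2 * M) ^ (1 - α) * ‖ζ - z‖ ^ (α - 1) :=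
    calc r ^ (α - 1) = (2 * M) ^ (1 - α) * (2 * M * r) ^ (α - 1) := by
          rw [Real.mul_rpow (by positivity) hr.le, ← mul_assoc, ← Real.rpow_add (by positivity)]
          simp
      _ ≤ (2 * M) ^ (1 - α) * ‖ζ - z‖ ^ (α - 1) := by
          refine mul_le_mul_of_nonneg_left
            (Real.rpow_le_rpow_of_nonpos hζz (hz.2.trans_eq ?_) (by linarith)) (by positivity)
          simp only [r]
          ring
  calc ‖deriv g z‖ ≤ ε * (2 * M + 1) ^ α * r ^ (α - 1) := by
        refine hcauchy.trans_eq ?_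
        rw [Real.mul_rpow (by positivity) hr.le, Real.rpow_sub_one hr.ne']
        ring
    _ ≤ ε * (2 * M + 1) ^ α * ((2 * M) ^ (1 - α) * ‖ζ - z‖ ^ (α - 1)) := by gcongr
    _ = _ := by ring

end CauchyEstimate

section LittleO

variable {g : ℂ → ℂ} {ζ : ℂ} {M α ε : ℝ}

theorem Asymptotics.IsBigOWith.deriv_stolzRegion (hζ : ‖ζ‖ = 1) (hα0 : 0 ≤ α) (hα1 : α ≤ 1)
    (hε : 0 ≤ ε) (hg : DifferentiableOn ℂ g (ball 0 1))
    (h : IsBigOWith ε (𝓝[StolzRegion ζ (2 * M + 1)] ζ) g fun w => ‖ζ - w‖ ^ α) :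
    IsBigOWith (ε * ((2 * M + 1) ^ α * (2 * M) ^ (1 - α))) (𝓝[StolzRegion ζ M] ζ) (deriv g)
      fun z => ‖ζ - z‖ ^ (α - 1) := by
  simp only [isBigOWith_iff, eventually_nhdsWithin_iff, Metric.eventually_nhds_iff,
    Real.norm_eq_abs, Real.abs_rpow_of_nonneg (norm_nonneg _), abs_norm] at h ⊢
  obtain ⟨δ, hδ, h⟩ := h
  refine ⟨δ / 2, half_pos hδ, fun z hzδ hz => ?_⟩
  have hr : (1 - ‖z‖) / 2 ≤ dist z ζ := by
    rw [dist_eq_norm]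
    linarith [norm_sub_norm_le ζ z, norm_sub_rev z ζ, hz.1]
  have hzζ : z ≠ ζ := by
    rintro rfl
    linarith [hz.1]
  refine norm_deriv_le_of_mem_stolzRegion hα0 hα1 hε hg hz hzζ fun w hw => ?_
  have hwδ : dist w ζ < δ :=
    calc dist w ζ ≤ dist w z + dist z ζ := dist_triangle _ _ _
      _ < δ := by rw [mem_sphere.1 hw]; linarith
  exact h hwδ (StolzRegion.sphere_subset hz hw)

theorem Asymptotics.IsLittleO.deriv_stolzRegion (hζ : ‖ζ‖ = 1) (hα0 : 0 ≤ α) (hα1 : α ≤ 1)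
    (hM : 0 < M) (hg : DifferentiableOn ℂ g (ball 0 1))
    (h : g =o[𝓝[StolzRegion ζ (2 * M + 1)] ζ] fun w => ‖ζ - w‖ ^ α) :
    deriv g =o[𝓝[StolzRegion ζ M] ζ] fun z => ‖ζ - z‖ ^ (α - 1) := by
  have hK : 0 < (2 * M + 1) ^ α * (2 * M) ^ (1 - α) := by positivity
  refine IsLittleO.of_isBigOWith fun c hc => ?_
  have hcK : 0 < c / ((2 * M + 1) ^ α * (2 * M) ^ (1 - α)) := div_pos hc hK
  simpa only [div_mul_cancel₀ _ hK.ne'] using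
    (h.forall_isBigOWith hcK).deriv_stolzRegion hζ hα0 hα1 hcK.le hg

end LittleO

theorem Asymptotics.isLittleO_sub_mul_of_tendsto_div {ι 𝕜 : Type*} [NormedField 𝕜]
    {l : Filter ι} {F G : ι → 𝕜} {σ : 𝕜} (hG : ∀ᶠ x in l, G x ≠ 0)
    (h : Tendsto (fun x => F x / G x) l (𝓝 σ)) : (fun x => F x - σ * G x) =o[l] G := by
  refine (isLittleO_iff_tendsto' (hG.mono fun x hx h0 => absurd h0 hx)).2 ?_
  rw [← sub_self σ]
  refine (h.sub_const σ).congr' (hG.mono fun x hx => ?_)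
  simp only [sub_div, mul_div_cancel_right₀ _ hx]

section Weight

variable {ζ z : ℂ}

lemma norm_one_sub_mul_conj (hζ : ‖ζ‖ = 1) (z : ℂ) : ‖1 - z * conj ζ‖ = ‖ζ - z‖ := by
  have hζζ : ζ * conj ζ = 1 := by
    rw [Complex.mul_conj, Complex.normSq_eq_norm_sq, hζ]; norm_num
  rw [← hζζ, ← sub_mul, norm_mul, Complex.norm_conj, hζ, mul_one]

lemma norm_one_sub_mul_conj_cpow (hζ : ‖ζ‖ = 1) (z : ℂ) (s : ℝ) :
    ‖(1 - z * conj ζ) ^ (s : ℂ)‖ = ‖ζ - z‖ ^ s := by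
  rw [Complex.norm_cpow_real, norm_one_sub_mul_conj hζ]

lemma one_sub_mul_conj_mem_slitPlane (hζ : ‖ζ‖ = 1) (hz : ‖z‖ < 1) :
    1 - z * conj ζ ∈ Complex.slitPlane := by
  refine Complex.mem_slitPlane_iff.2 (Or.inl ?_)
  have : (z * conj ζ).re < 1 := by
    refine (Complex.re_le_norm _).trans_lt ?_
    rwa [norm_mul, Complex.norm_conj, hζ, mul_one]
  simpa using this

lemma hasDerivAt_one_sub_mul_conj_cpow (hζ : ‖ζ‖ = 1) (hz : ‖z‖ < 1) (s : ℂ) :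
    HasDerivAt (fun w => (1 - w * conj ζ) ^ s)
      (-conj ζ * s * (1 - z * conj ζ) ^ (s - 1)) z := by
  have h := (((hasDerivAt_id' z).mul_const (conj ζ)).const_sub 1).cpow_const (c := s)
    (one_sub_mul_conj_mem_slitPlane hζ hz)
  convert h using 1
  ring

end Weight

/-- let `0 < α < 1`, `ζ ∈ 𝕋`, and `f` analytic on `𝔻` such that
`(f(ζ) − f z)/(1 − z conj ζ)^α → σ` nontangentially.  Then
`f'(z)(1 − z conj ζ)^{1−α} → σ conj ζ α` nontangentially (principal branch powers). -/
theorem difference_quotient_to_weighted_derivative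
    (α : ℝ) (hα0 : 0 < α) (hα1 : α < 1)
    (ζ : ℂ) (hζ : ‖ζ‖ = 1)
    (f : ℂ → ℂ) (hf : DifferentiableOn ℂ f (Metric.ball (0 : ℂ) 1))
    (fζ σ : ℂ)
    (hquot : NTLimit (fun z => (fζ - f z) / (1 - z * starRingEnd ℂ ζ) ^ (α : ℂ)) ζ σ) :
    NTLimit (fun z => deriv f z * (1 - z * starRingEnd ℂ ζ) ^ ((1 : ℂ) - α))
      ζ (σ * starRingEnd ℂ ζ * α) := by
  intro M hM
  set u : ℂ → ℂ := fun z => 1 - z * conj ζ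
  set g : ℂ → ℂ := fun z => fζ - f z - σ * u z ^ (α : ℂ)
  have hu : ∀ z : ℂ, ‖z‖ < 1 → u z ≠ 0 := fun z hz =>
    Complex.slitPlane_ne_zero (one_sub_mul_conj_mem_slitPlane hζ hz)
  have hg_deriv : ∀ z ∈ ball (0 : ℂ) 1,
      HasDerivAt g (σ * conj ζ * α * u z ^ ((α : ℂ) - 1) - deriv f z) z := fun z hz =>
    (((hasDerivAt_const z fζ).sub (hf.hasDerivAt (isOpen_ball.mem_nhds hz))).sub
      ((hasDerivAt_one_sub_mul_conj_cpow hζ (mem_ball_zero_iff.1 hz) _).const_mul σ)).congr_deriv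
      (by ring)
  have hg : g =o[𝓝[StolzRegion ζ (2 * M + 1)] ζ] fun w => ‖ζ - w‖ ^ α := by
    simp only [← norm_one_sub_mul_conj_cpow hζ, isLittleO_norm_right]
    exact isLittleO_sub_mul_of_tendsto_div
      (eventually_nhdsWithin_of_forall fun z hz => Complex.cpow_ne_zero_iff.2 (Or.inl (hu z hz.1)))
      (hquot (2 * M + 1) (by linarith))
  have hg' : deriv g =o[𝓝[StolzRegion ζ M] ζ] fun z => u z ^ ((α : ℂ) - 1) := by
    simpa only [← norm_one_sub_mul_conj_cpow hζ, Complex.ofReal_sub, Complex.ofReal_one,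
      isLittleO_norm_right] using hg.deriv_stolzRegion hζ hα0.le hα1.le hM
        fun z hz => (hg_deriv z hz).differentiableAt.differentiableWithinAt
  have hlim := (tendsto_const_nhds (x := σ * conj ζ * α)).sub hg'.tendsto_div_nhds_zero
  rw [sub_zero] at hlim
  refine hlim.congr' (eventually_nhdsWithin_of_forall fun z hz => ?_)
  have hpow : u z ^ ((1 : ℂ) - α) = (u z ^ ((α : ℂ) - 1))⁻¹ := by
    rw [← Complex.cpow_neg, neg_sub]
  have hne : u z ^ ((α : ℂ) - 1) ≠ 0 := Complex.cpow_ne_zero_iff.2 (Or.inl (hu z hz.1))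
  change _ = deriv f z * u z ^ ((1 : ℂ) - α)
  rw [(hg_deriv z (mem_ball_zero_iff.2 hz.1)).deriv, hpow]
  field_simp
  ring
end
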